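/- arXiv:1602.07432 — 2 statements merged into one kernel-verified Lean document; each statement's English description precedes it below -/
import Mathlib

section
/- If σ = (a₁ a₂) is a transposition contained in a permutation σ of A with all other cycles restricted to A' = A∖{a₁,a₂}, then σ-fixed phylogenetic trees on A are in bijection with pairs (γ', e) of a σ'-fixed tree γ' on A' and an edge e of γ', where the inverse map inserts either a cherry {a₁,a₂} at the midpoint of e when the σ'-edge-cycle of e has size 1, or inserts single leaves a₁ at e and a₂ at σ'(e) when the edge-cycle has size 2. -/
universe u
variable {α β : Type u}

/-- Rooted binary trees with labelled leaves (embedded). -/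
inductive RTree (α : Type u) : Type u
  | leaf : α → RTree α
  | node : RTree α → RTree α → RTree α

namespace RTree

def relabel (f : α → β) : RTree α → RTree β
  | .leaf a => .leaf (f a)
  | .node l r => .node (l.relabel f) (r.relabel f)

def leaves : RTree α → Multiset α
  | .leaf a => {a}
  | .node l r => l.leaves + r.leaves

/-- Identification of non-embedded trees: the two children of a node are unordered. -/
inductive TEquiv : RTree α → RTree α → Prop
  | leaf (a : α) : TEquiv (.leaf a) (.leaf a)
  | node {l r l' r'} : TEquiv l l' → TEquiv r r' → TEquiv (.node l r) (.node l' r')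
  | swap {l r l' r'} : TEquiv l r' → TEquiv r l' → TEquiv (.node l r) (.node l' r')

theorem TEquiv.leaves_eq {t t' : RTree α} (h : TEquiv t t') : t.leaves = t'.leaves := by
  induction h with
  | leaf a => rfl
  | node _ _ ih1 ih2 => simp [leaves, ih1, ih2]
  | swap _ _ ih1 ih2 => simp [leaves, ih1, ih2, add_comm]

theorem TEquiv.relabel_congr (f : α → β) {t t' : RTree α} (h : TEquiv t t') :
    TEquiv (t.relabel f) (t'.relabel f) := by
  induction h with
  | leaf a => exact .leaf _
  | node _ _ ih1 ih2 => exact .node ih1 ih2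
  | swap _ _ ih1 ih2 => exact .swap ih1 ih2

end RTree

/-- Phylogenetic (rooted, non-embedded, leaf-labelled) trees with labels in `α`. -/
def PTree (α : Type u) : Type u := Quot (@RTree.TEquiv α)

namespace PTree

def leaves : PTree α → Multiset α :=
  Quot.lift RTree.leaves fun _ _ h => h.leaves_eq

def relabel (f : α → α) : PTree α → PTree α :=
  Quot.lift (fun t => Quot.mk _ (t.relabel f)) fun _ _ h => Quot.sound (h.relabel_congr f)

end PTree

/-- The phylogenetic trees with leaf label set `A` that are fixed by the relabelling
action of `σ`. -/
def fixedTrees (σ : Equiv.Perm α) (A : Finset α) : Set (PTree α) :=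
  {t | t.leaves = A.val ∧ t.relabel σ = t}

/-- The orbit (cycle) of `a` under the permutation `σ`, as a finset. -/
noncomputable def orbitF [Fintype α] (σ : Equiv.Perm α) (a : α) : Finset α := by
  classical exact Finset.univ.filter fun x => σ.SameCycle a x

/-- `∏_{i=2}^{ℓ} (2(λ_i + ⋯ + λ_ℓ) - 1)` where the parts `λ_1 ≥ λ_2 ≥ ⋯ ≥ λ_ℓ` are the
elements of `m` in non-increasing order: equivalently, the factors are `2 s - 1` where `s`
runs over the sums of the `j` smallest parts, `j = 1, …, ℓ - 1`. -/
def prodFormula (m : Multiset ℕ) : ℕ :=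
  ∏ j ∈ Finset.range (m.card - 1), (2 * ((m.sort (· ≤ ·)).take (j + 1)).sum - 1)

/-- `z_λ = ∏_m m^{m_m} · m_m!` where `m_m` is the multiplicity of `m`. -/
def zPart (m : Multiset ℕ) : ℕ :=
  ∏ p ∈ m.toFinset, p ^ m.count p * (m.count p).factorial


/-! ### Auxiliary development for Statement 17 -/

deriving instance DecidableEq for RTree

set_option linter.unusedSectionVars false

namespace RTree

theorem TEquiv.refl : ∀ t : RTree α, TEquiv t t
  | .leaf a => .leaf a
  | .node l r => .node (TEquiv.refl l) (TEquiv.refl r)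

theorem TEquiv.leaf_eq {a : α} {t : RTree α} (h : TEquiv (.leaf a) t) : t = .leaf a := by
  cases h; rfl

section DecEq
variable [DecidableEq α]

/-- The set of leaf labels of a tree. -/
def leafSet (t : RTree α) : Finset α := t.leaves.toFinset

@[simp] theorem leafSet_leaf (a : α) : leafSet (.leaf a) = {a} := rfl

@[simp] theorem leafSet_node (l r : RTree α) :
    leafSet (.node l r) = leafSet l ∪ leafSet r := by
  simp [leafSet, leaves]

@[simp] theorem mem_leafSet {a : α} {t : RTree α} : a ∈ leafSet t ↔ a ∈ t.leaves := by
  simp [leafSet]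

theorem leaves_card_pos : ∀ t : RTree α, 0 < Multiset.card t.leaves
  | .leaf a => by simp [leaves]
  | .node l r => by
      simp only [leaves, Multiset.card_add]
      have := leaves_card_pos l; omega

theorem leaves_ne_zero (t : RTree α) : t.leaves ≠ 0 := by
  intro h
  have := leaves_card_pos t
  rw [h] at this; simp at this

theorem leafSet_nonempty (t : RTree α) : (leafSet t).Nonempty := by
  obtain ⟨a, ha⟩ := Multiset.exists_mem_of_ne_zero (leaves_ne_zero t)
  exact ⟨a, by simpa using ha⟩

theorem eq_leaf_of_leaves_eq {t : RTree α} {a : α} (h : t.leaves = {a}) : t = .leaf a := by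
  cases t with
  | leaf b => simp [leaves] at h; rw [h]
  | node l r =>
    exfalso
    have h1 := leaves_card_pos l
    have h2 := leaves_card_pos r
    have : Multiset.card (leaves (.node l r)) = 1 := by rw [h]; simp
    simp only [leaves, Multiset.card_add] at this
    omega

theorem nodup_node {l r : RTree α} (h : (RTree.node l r).leaves.Nodup) :
    l.leaves.Nodup ∧ r.leaves.Nodup ∧ Disjoint l.leaves r.leaves := by
  simp only [leaves, Multiset.nodup_add] at h
  exact h

theorem leafSet_disjoint_of_nodup {l r : RTree α} (h : (RTree.node l r).leaves.Nodup) :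
    Disjoint (leafSet l) (leafSet r) := by
  obtain ⟨-, -, hd⟩ := nodup_node h
  rw [Finset.disjoint_left]
  intro a hal har
  exact Multiset.disjoint_left.1 hd (by simpa using hal) (by simpa using har)

/-- The set of leaf-sets of subtrees of `t`. -/
def subs : RTree α → Finset (Finset α)
  | .leaf b => {{b}}
  | .node l r => insert (leafSet (.node l r)) (subs l ∪ subs r)

@[simp] theorem subs_leaf (b : α) : subs (.leaf b) = {({b} : Finset α)} := rfl

@[simp] theorem subs_node (l r : RTree α) :
    subs (.node l r) = insert (leafSet (.node l r)) (subs l ∪ subs r) := rfl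

theorem leafSet_mem_subs : ∀ t : RTree α, leafSet t ∈ subs t
  | .leaf b => by simp
  | .node l r => by simp

theorem subset_of_mem_subs : ∀ {t : RTree α} {X : Finset α}, X ∈ subs t → X ⊆ leafSet t
  | .leaf b, X, h => by simp at h; simp [h]
  | .node l r, X, h => by
      simp only [subs_node, Finset.mem_insert, Finset.mem_union] at h
      rcases h with h | h | h
      · simp [h]
      · exact (subset_of_mem_subs h).trans (by simp [Finset.subset_union_left])
      · exact (subset_of_mem_subs h).trans (by simp [Finset.subset_union_right])

theorem nonempty_of_mem_subs : ∀ {t : RTree α} {X : Finset α}, X ∈ subs t → X.Nonempty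
  | .leaf b, X, h => by simp at h; simp [h]
  | .node l r, X, h => by
      simp only [subs_node, Finset.mem_insert, Finset.mem_union] at h
      rcases h with h | h | h
      · rw [h]; exact leafSet_nonempty _
      · exact nonempty_of_mem_subs h
      · exact nonempty_of_mem_subs h

theorem singleton_mem_subs : ∀ {t : RTree α} {a : α}, a ∈ t.leaves → {a} ∈ subs t
  | .leaf b, a, h => by simp [leaves] at h; simp [h]
  | .node l r, a, h => by
      simp only [leaves, Multiset.mem_add] at h
      simp only [subs_node, Finset.mem_insert, Finset.mem_union]
      rcases h with h | h
      · exact Or.inr (Or.inl (singleton_mem_subs h))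
      · exact Or.inr (Or.inr (singleton_mem_subs h))

theorem not_mem_subs_of_disjoint {t : RTree α} {X : Finset α} (hX : X.Nonempty)
    (hd : Disjoint X (leafSet t)) : X ∉ subs t := by
  intro h
  have := subset_of_mem_subs h
  obtain ⟨a, ha⟩ := hX
  exact Finset.disjoint_left.1 hd ha (this ha)

theorem subs_nested : ∀ {t : RTree α}, t.leaves.Nodup → ∀ {X Y : Finset α},
    X ∈ subs t → Y ∈ subs t → X ⊆ Y ∨ Y ⊆ X ∨ Disjoint X Y
  | .leaf b, _, X, Y, hX, hY => by simp at hX hY; subst hX; subst hY; simp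
  | .node l r, hn, X, Y, hX, hY => by
      obtain ⟨hnl, hnr, -⟩ := nodup_node hn
      have hd := leafSet_disjoint_of_nodup hn
      simp only [subs_node, Finset.mem_insert, Finset.mem_union] at hX hY
      rcases hX with hX | hX | hX <;> rcases hY with hY | hY | hY
      · subst hX; subst hY; simp
      · subst hX; right; left;
        exact (subset_of_mem_subs hY).trans (by simp [Finset.subset_union_left])
      · subst hX; right; left;
        exact (subset_of_mem_subs hY).trans (by simp [Finset.subset_union_right])
      · subst hY; left
        exact (subset_of_mem_subs hX).trans (by simp [Finset.subset_union_left])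
      · exact subs_nested hnl hX hY
      · right; right
        exact Finset.disjoint_of_subset_left (subset_of_mem_subs hX)
          (Finset.disjoint_of_subset_right (subset_of_mem_subs hY) hd)
      · subst hY; left
        exact (subset_of_mem_subs hX).trans (by simp [Finset.subset_union_right])
      · right; right
        exact Finset.disjoint_of_subset_left (subset_of_mem_subs hX)
          (Finset.disjoint_of_subset_right (subset_of_mem_subs hY) hd.symm)
      · exact subs_nested hnr hX hY

theorem leafSet_card {t : RTree α} (hn : t.leaves.Nodup) :
    (leafSet t).card = Multiset.card t.leaves := by
  simp [leafSet, Multiset.toFinset_card_of_nodup hn]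

theorem subs_card : ∀ {t : RTree α}, t.leaves.Nodup →
    (subs t).card = 2 * Multiset.card t.leaves - 1
  | .leaf b, _ => by simp [leaves]
  | .node l r, hn => by
      obtain ⟨hnl, hnr, -⟩ := nodup_node hn
      have hd := leafSet_disjoint_of_nodup hn
      have hdis : Disjoint (subs l) (subs r) := by
        rw [Finset.disjoint_left]
        intro X hXl hXr
        obtain ⟨a, ha⟩ := nonempty_of_mem_subs hXl
        exact Finset.disjoint_left.1 hd (subset_of_mem_subs hXl ha)
          (subset_of_mem_subs hXr ha)
      have htop : leafSet (.node l r) ∉ subs l ∪ subs r := by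
        intro h
        obtain ⟨a, ha⟩ := leafSet_nonempty r
        obtain ⟨b, hb⟩ := leafSet_nonempty l
        rcases Finset.mem_union.1 h with h | h
        · have := subset_of_mem_subs h (by simp [ha] : a ∈ leafSet (.node l r))
          exact Finset.disjoint_left.1 hd this ha
        · have := subset_of_mem_subs h (by simp [hb] : b ∈ leafSet (.node l r))
          exact Finset.disjoint_left.1 hd hb this
      rw [subs_node, Finset.card_insert_of_notMem htop, Finset.card_union_of_disjoint hdis,
        subs_card hnl, subs_card hnr]
      have h1 := leaves_card_pos l
      have h2 := leaves_card_pos r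
      simp only [leaves, Multiset.card_add]
      omega



theorem mul_add_single {γ : Type*} (s : Multiset γ) (a : γ) : s + {a} = a ::ₘ s := by
  rw [add_comm, Multiset.singleton_add]

theorem mul_add_cons {γ : Type*} (s t : Multiset γ) (a : γ) :
    s + (a ::ₘ t) = a ::ₘ (s + t) := by
  rw [← Multiset.singleton_add, add_left_comm, Multiset.singleton_add]

/-! #### Insertion -/

/-- Insert leaf `a` as a sibling of the subtree with leaf set `S`. -/
def ins (a : α) (S : Finset α) : RTree α → RTree α
  | .leaf b => if ({b} : Finset α) = S then .node (.leaf b) (.leaf a) else .leaf b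
  | .node l r => if leafSet (.node l r) = S then .node (.node l r) (.leaf a)
      else .node (ins a S l) (ins a S r)

theorem ins_leaf (a : α) (S : Finset α) (b : α) :
    ins a S (.leaf b) = if ({b} : Finset α) = S then .node (.leaf b) (.leaf a)
      else .leaf b := rfl

theorem ins_node (a : α) (S : Finset α) (l r : RTree α) :
    ins a S (.node l r) = if leafSet (.node l r) = S then .node (.node l r) (.leaf a)
      else .node (ins a S l) (ins a S r) := rfl

theorem ins_self (a : α) (t : RTree α) : ins a (leafSet t) t = .node t (.leaf a) := by
  cases t with
  | leaf b => rw [ins_leaf, if_pos]; rfl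
  | node l r => rw [ins_node, if_pos rfl]

theorem ins_of_not_mem_subs {a : α} {S : Finset α} :
    ∀ {t : RTree α}, S ∉ subs t → ins a S t = t
  | .leaf b, h => by
      simp only [subs_leaf, Finset.mem_singleton] at h
      rw [ins_leaf, if_neg fun he => h he.symm]
  | .node l r, h => by
      simp only [subs_node, Finset.mem_insert, Finset.mem_union] at h
      push_neg at h
      obtain ⟨h1, h2, h3⟩ := h
      rw [ins_node, if_neg fun he => h1 he.symm, ins_of_not_mem_subs h2,
        ins_of_not_mem_subs h3]

theorem leafSet_subset_ins (a : α) (S : Finset α) :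
    ∀ t : RTree α, leafSet t ⊆ leafSet (ins a S t)
  | .leaf b => by
      rw [ins_leaf]; split_ifs
      · intro x hx; simp at hx ⊢; tauto
      · exact Finset.Subset.refl _
  | .node l r => by
      rw [ins_node]; split_ifs
      · intro x hx; simp at hx ⊢; tauto
      · simp only [leafSet_node]
        exact Finset.union_subset_union (leafSet_subset_ins a S l) (leafSet_subset_ins a S r)

theorem ins_leafSet_subset (a : α) (S : Finset α) :
    ∀ t : RTree α, leafSet (ins a S t) ⊆ insert a (leafSet t)
  | .leaf b => by
      rw [ins_leaf]; split_ifs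
      · intro x hx; simp at hx ⊢; tauto
      · exact Finset.subset_insert _ _
  | .node l r => by
      rw [ins_node]; split_ifs
      · intro x hx; simp at hx ⊢; tauto
      · simp only [leafSet_node]
        intro x hx
        rcases Finset.mem_union.1 hx with h | h
        · have := ins_leafSet_subset a S l h
          simp at this ⊢; tauto
        · have := ins_leafSet_subset a S r h
          simp at this ⊢; tauto

theorem ins_ne_leaf {a : α} {S : Finset α} :
    ∀ {t : RTree α}, a ∉ t.leaves → ins a S t ≠ .leaf a
  | .leaf b, ha => by
      simp only [leaves, Multiset.mem_singleton] at ha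
      rw [ins_leaf]; split_ifs
      · simp
      · intro h; cases h; exact ha rfl
  | .node l r, _ => by rw [ins_node]; split_ifs <;> simp

theorem mem_leaves_ins_iff {a : α} {S : Finset α} :
    ∀ {t : RTree α}, a ∉ t.leaves → (a ∈ (ins a S t).leaves ↔ S ∈ subs t)
  | .leaf b, ha => by
      simp only [leaves, Multiset.mem_singleton] at ha
      rw [ins_leaf]
      split_ifs with h
      · simp [leaves, ← h]
      · simp only [subs_leaf, Finset.mem_singleton, leaves, Multiset.mem_singleton]
        constructor
        · intro h'; exact absurd h' ha
        · intro h'; exact absurd h'.symm h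
  | .node l r, ha => by
      simp only [leaves, Multiset.mem_add, not_or] at ha
      obtain ⟨hal, har⟩ := ha
      rw [ins_node]
      split_ifs with h
      · simp only [leaves, Multiset.mem_add, Multiset.mem_singleton, subs_node]
        simp [h]
      · simp only [leaves, Multiset.mem_add, subs_node, Finset.mem_insert, Finset.mem_union,
          mem_leaves_ins_iff hal, mem_leaves_ins_iff har]
        constructor
        · intro h'; tauto
        · rintro (h' | h' | h')
          · exact absurd h'.symm h
          · tauto
          · tauto

theorem ins_eq_of_disjoint {a : α} {S : Finset α} {t : RTree α} (hS : S.Nonempty)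
    (hd : Disjoint S (leafSet t)) : ins a S t = t :=
  ins_of_not_mem_subs (not_mem_subs_of_disjoint hS hd)

theorem leaves_ins {a : α} {S : Finset α} :
    ∀ {t : RTree α}, t.leaves.Nodup → S ∈ subs t → (ins a S t).leaves = a ::ₘ t.leaves
  | .leaf b, _, hS => by
      simp only [subs_leaf, Finset.mem_singleton] at hS
      rw [ins_leaf, if_pos hS.symm]
      show ({b} : Multiset α) + {a} = a ::ₘ {b}
      rw [mul_add_single]
  | .node l r, hn, hS => by
      obtain ⟨hnl, hnr, -⟩ := nodup_node hn
      have hd := leafSet_disjoint_of_nodup hn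
      rw [ins_node]
      split_ifs with h
      · show leaves (.node l r) + {a} = a ::ₘ leaves (.node l r)
        rw [mul_add_single]
      · simp only [subs_node, Finset.mem_insert, Finset.mem_union] at hS
        rcases hS with hS | hS | hS
        · exact absurd hS.symm h
        · have hSr : S ∉ subs r := not_mem_subs_of_disjoint (nonempty_of_mem_subs hS)
            (Finset.disjoint_of_subset_left (subset_of_mem_subs hS) hd)
          rw [ins_of_not_mem_subs hSr]
          show (ins a S l).leaves + r.leaves = a ::ₘ leaves (.node l r)
          rw [leaves_ins hnl hS, Multiset.cons_add]; rfl
        · have hSl : S ∉ subs l := not_mem_subs_of_disjoint (nonempty_of_mem_subs hS)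
            (Finset.disjoint_of_subset_left (subset_of_mem_subs hS) hd.symm)
          rw [ins_of_not_mem_subs hSl]
          show l.leaves + (ins a S r).leaves = a ::ₘ leaves (.node l r)
          rw [leaves_ins hnr hS, mul_add_cons]; rfl

theorem mem_subs_ins {a : α} {S S' : Finset α} :
    ∀ {t : RTree α}, S' ∈ subs t → (S' = S ∨ ¬ S ⊆ S') → S' ∈ subs (ins a S t) := by
  intro t
  induction t with
  | leaf b =>
      intro h hc
      rw [ins_leaf]; split_ifs
      · simp at h ⊢; tauto
      · exact h
  | node l r ihl ihr =>
      intro h hc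
      by_cases hmem : S ∈ subs (RTree.node l r)
      · rw [ins_node]
        split_ifs with htop
        · simp only [subs_node, Finset.mem_insert, Finset.mem_union] at h ⊢
          tauto
        · simp only [subs_node, Finset.mem_insert, Finset.mem_union] at h ⊢
          rcases h with h | h | h
          · exfalso
            rcases hc with hc | hc
            · exact htop (h ▸ hc ▸ rfl)
            · rw [h] at hc
              exact hc (subset_of_mem_subs hmem)
          · exact Or.inr (Or.inl (ihl h hc))
          · exact Or.inr (Or.inr (ihr h hc))
      · rw [ins_of_not_mem_subs hmem]; exact h

/-! #### Deletion -/

/-- Delete the leaf `a`. -/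
def del (a : α) : RTree α → RTree α
  | .leaf b => .leaf b
  | .node l r =>
      if l = .leaf a then r
      else if r = .leaf a then l
      else if a ∈ l.leaves then .node (del a l) r
      else .node l (del a r)

theorem del_leaf (a b : α) : del a (.leaf b) = .leaf b := rfl

theorem del_node (a : α) (l r : RTree α) :
    del a (.node l r) =
      if l = .leaf a then r
      else if r = .leaf a then l
      else if a ∈ l.leaves then .node (del a l) r
      else .node l (del a r) := rfl

theorem ne_leaf_of_not_mem {a : α} {t : RTree α} (h : a ∉ t.leaves) : t ≠ .leaf a := by
  intro he; subst he; simp [leaves] at h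

theorem del_of_not_mem {a : α} : ∀ {t : RTree α}, a ∉ t.leaves → del a t = t
  | .leaf b, _ => rfl
  | .node l r, h => by
      simp only [leaves, Multiset.mem_add, not_or] at h
      rw [del_node, if_neg (ne_leaf_of_not_mem h.1), if_neg (ne_leaf_of_not_mem h.2),
        if_neg h.1, del_of_not_mem h.2]

theorem del_ins {a : α} {S : Finset α} :
    ∀ {t : RTree α}, t.leaves.Nodup → a ∉ t.leaves → del a (ins a S t) = t := by
  intro t
  induction t with
  | leaf b =>
      intro _ ha
      simp only [leaves, Multiset.mem_singleton] at ha
      rw [ins_leaf]; split_ifs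
      · rw [del_node, if_neg (by simp [Ne.symm ha]), if_pos rfl]
      · rfl
  | node l r ihl ihr =>
      intro hn ha
      obtain ⟨hnl, hnr, -⟩ := nodup_node hn
      have hd := leafSet_disjoint_of_nodup hn
      simp only [leaves, Multiset.mem_add, not_or] at ha
      obtain ⟨hal, har⟩ := ha
      rw [ins_node]
      split_ifs with htop
      · rw [del_node, if_neg (by intro he; cases he), if_pos rfl]
      · by_cases hSl : S ∈ subs l
        · have hSr : S ∉ subs r := not_mem_subs_of_disjoint (nonempty_of_mem_subs hSl)
            (Finset.disjoint_of_subset_left (subset_of_mem_subs hSl) hd)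
          rw [ins_of_not_mem_subs hSr, del_node,
            if_neg (ins_ne_leaf hal), if_neg (ne_leaf_of_not_mem har), if_pos, ihl hnl hal]
          rw [mem_leaves_ins_iff hal]; exact hSl
        · rw [ins_of_not_mem_subs hSl, del_node, if_neg (ne_leaf_of_not_mem hal),
            if_neg (ins_ne_leaf har), if_neg hal]
          by_cases hSr : S ∈ subs r
          · rw [ihr hnr har]
          · rw [ins_of_not_mem_subs hSr, del_of_not_mem har]


theorem leaves_del {a : α} : ∀ {t : RTree α}, t.leaves.count a ≤ 1 → t ≠ .leaf a →
    (del a t).leaves = t.leaves.erase a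
  | .leaf b, _, hne => by
      rw [del_leaf]
      have hba : a ≠ b := fun h => hne (by rw [h])
      simp only [leaves]
      rw [Multiset.erase_of_notMem (by simpa using hba)]
  | .node l r, hc, _ => by
      have hcnt : l.leaves.count a + r.leaves.count a ≤ 1 := by
        simpa [leaves] using hc
      rw [del_node]
      split_ifs with h1 h2 h3
      · subst h1
        show r.leaves = (({a} : Multiset α) + r.leaves).erase a
        rw [Multiset.singleton_add, Multiset.erase_cons_head]
      · subst h2
        have hal : a ∉ l.leaves := by
          intro hmem
          have h1 : 1 ≤ l.leaves.count a := Multiset.one_le_count_iff_mem.2 hmem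
          have h2 : (RTree.leaf a).leaves.count a = 1 := by simp [leaves]
          omega
        show l.leaves = (l.leaves + ({a} : Multiset α)).erase a
        rw [mul_add_single, Multiset.erase_cons_head]
      · have hcl : l.leaves.count a ≤ 1 := le_trans (Nat.le_add_right _ _) hcnt
        show (del a l).leaves + r.leaves = (l.leaves + r.leaves).erase a
        rw [leaves_del hcl h1, Multiset.erase_add_left_pos _ h3]
      · show l.leaves + (del a r).leaves = (l.leaves + r.leaves).erase a
        by_cases har : a ∈ r.leaves
        · have hcr : r.leaves.count a ≤ 1 := le_trans (Nat.le_add_left _ _) hcnt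
          rw [leaves_del hcr h2, Multiset.erase_add_right_pos _ har]
        · rw [del_of_not_mem har, Multiset.erase_of_notMem (by
            simp only [leaves, Multiset.mem_add]; tauto)]

theorem ins_comm {a b : α} {S T : Finset α} (hS : S.Nonempty) (hT : T.Nonempty)
    (hd : Disjoint S T) (haT : a ∉ T) (hbS : b ∉ S) :
    ∀ t : RTree α, ins a S (ins b T t) = ins b T (ins a S t) := by
  have key : ∀ (a b : α) (S T : Finset α), S.Nonempty → T.Nonempty → Disjoint S T →
      a ∉ T → b ∉ S → ∀ (t : RTree α), leafSet t = T →
      ins a S (ins b T t) = ins b T (ins a S t) := by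
    intro a b S T hS hT hd haT hbS t hTt
    have hdisS : Disjoint S (leafSet t) := hTt ▸ hd
    have hcond1 : leafSet (RTree.node t (.leaf b)) ≠ S := by
      intro h
      obtain ⟨y, hy⟩ := hT
      have hyS : y ∈ S := by
        rw [← h]
        simp only [leafSet_node, leafSet_leaf, Finset.mem_union]
        left; rw [hTt]; exact hy
      exact Finset.disjoint_left.1 hd hyS hy
    have hcond2 : ({b} : Finset α) ≠ S := by
      intro h
      exact hbS (h ▸ Finset.mem_singleton_self b)
    rw [← hTt, ins_self, ins_eq_of_disjoint hS hdisS, ins_self]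
    rw [ins_node a S t (.leaf b), if_neg hcond1, ins_leaf a S b,
      if_neg hcond2, ins_eq_of_disjoint hS hdisS]
  intro t
  induction t with
  | leaf c =>
      by_cases hcT : leafSet (RTree.leaf c) = T
      · exact key a b S T hS hT hd haT hbS _ hcT
      · by_cases hcS : leafSet (RTree.leaf c) = S
        · exact (key b a T S hT hS hd.symm hbS haT _ hcS).symm
        · simp only [leafSet_leaf] at hcT hcS
          simp only [ins_leaf, if_neg hcT, if_neg hcS]
  | node l r ihl ihr =>
      by_cases hcT : leafSet (RTree.node l r) = T
      · exact key a b S T hS hT hd haT hbS _ hcT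
      · by_cases hcS : leafSet (RTree.node l r) = S
        · exact (key b a T S hT hS hd.symm hbS haT _ hcS).symm
        · have hne : ∀ (c : α) (U V : Finset α), c ∉ U → leafSet (RTree.node l r) ≠ U →
              leafSet (RTree.node (ins c V l) (ins c V r)) ≠ U := by
            intro c U V hcU hLU h
            apply hLU
            apply Finset.Subset.antisymm
            · rw [← h]
              simp only [leafSet_node]
              exact Finset.union_subset_union (leafSet_subset_ins c V l)
                (leafSet_subset_ins c V r)
            · intro x hx
              have hxc : x ≠ c := by rintro rfl; exact hcU hx
              rw [← h] at hx
              simp only [leafSet_node, Finset.mem_union] at hx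
              have hx' : x ∈ insert c (leafSet l) ∨ x ∈ insert c (leafSet r) := by
                rcases hx with hx | hx
                · exact Or.inl (ins_leafSet_subset c V l hx)
                · exact Or.inr (ins_leafSet_subset c V r hx)
              simp only [leafSet_node, Finset.mem_union, Finset.mem_insert] at *
              tauto
          rw [ins_node b T l r, if_neg hcT, ins_node a S l r, if_neg hcS,
            ins_node a S (ins b T l) (ins b T r), if_neg (hne b S T hbS hcS),
            ins_node b T (ins a S l) (ins a S r), if_neg (hne a T S haT hcT),
            ihl, ihr]

theorem teq_ins_cherry {a b : α} {S : Finset α} :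
    ∀ {t : RTree α}, a ∉ t.leaves → b ∉ t.leaves →
      TEquiv (ins b {a} (ins a S t)) (ins a {b} (ins b S t)) := by
  intro t
  induction t with
  | leaf c =>
      intro ha hb
      simp only [leaves, Multiset.mem_singleton] at ha hb
      have hca : ({c} : Finset α) ≠ {a} := by
        intro h; simp only [Finset.singleton_inj] at h; exact ha h.symm
      have hcb : ({c} : Finset α) ≠ {b} := by
        intro h; simp only [Finset.singleton_inj] at h; exact hb h.symm
      by_cases hcS : ({c} : Finset α) = S
      · rw [ins_leaf a S, if_pos hcS, ins_leaf b S, if_pos hcS]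
        have h1 : leafSet (RTree.node (.leaf c) (.leaf a)) ≠ ({a} : Finset α) := by
          intro h
          have : c ∈ ({a} : Finset α) := by rw [← h]; simp
          simp at this; exact ha this.symm
        have h2 : leafSet (RTree.node (.leaf c) (.leaf b)) ≠ ({b} : Finset α) := by
          intro h
          have : c ∈ ({b} : Finset α) := by rw [← h]; simp
          simp at this; exact hb this.symm
        rw [ins_node, if_neg h1, ins_leaf b {a} c, if_neg hca, ins_leaf b {a} a, if_pos rfl]
        rw [ins_node, if_neg h2, ins_leaf a {b} c, if_neg hcb, ins_leaf a {b} b, if_pos rfl]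
        exact .node (.refl _) (.swap (.refl _) (.refl _))
      · rw [ins_leaf a S, if_neg hcS, ins_leaf b S, if_neg hcS,
          ins_leaf b {a} c, if_neg hca, ins_leaf a {b} c, if_neg hcb]
        exact .refl _
  | node l r ihl ihr =>
      intro ha hb
      have hda : Disjoint ({a} : Finset α) (leafSet (RTree.node l r)) := by
        simp only [Finset.disjoint_singleton_left, mem_leafSet]; exact ha
      have hdb : Disjoint ({b} : Finset α) (leafSet (RTree.node l r)) := by
        simp only [Finset.disjoint_singleton_left, mem_leafSet]; exact hb
      simp only [leaves, Multiset.mem_add, not_or] at ha hb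
      have hne : ∀ (c d : α) (V : Finset α), c ∉ l.leaves → c ∉ r.leaves →
          leafSet (RTree.node (ins d V l) (ins d V r)) ≠ ({c} : Finset α) := by
        intro c d V hcl hcr h
        obtain ⟨x, hx⟩ := leafSet_nonempty l
        have hxc : x ∈ ({c} : Finset α) := by
          rw [← h]
          simp only [leafSet_node, Finset.mem_union]
          exact Or.inl (leafSet_subset_ins d V l hx)
        simp only [Finset.mem_singleton] at hxc
        subst hxc
        exact hcl (mem_leafSet.1 hx)
      by_cases hcS : leafSet (RTree.node l r) = S
      · rw [← hcS, ins_self, ins_self]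
        have h1 : leafSet (RTree.node (RTree.node l r) (.leaf a))
            ≠ ({a} : Finset α) := by
          intro h
          obtain ⟨x, hx⟩ := leafSet_nonempty l
          have hxa : x ∈ ({a} : Finset α) := by
            rw [← h]; simp only [leafSet_node, Finset.mem_union]
            left; left; exact hx
          simp only [Finset.mem_singleton] at hxa
          subst hxa
          exact ha.1 (mem_leafSet.1 hx)
        have h2 : leafSet (RTree.node (RTree.node l r) (.leaf b))
            ≠ ({b} : Finset α) := by
          intro h
          obtain ⟨x, hx⟩ := leafSet_nonempty l
          have hxb : x ∈ ({b} : Finset α) := by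
            rw [← h]; simp only [leafSet_node, Finset.mem_union]
            left; left; exact hx
          simp only [Finset.mem_singleton] at hxb
          subst hxb
          exact hb.1 (mem_leafSet.1 hx)
        rw [ins_node b {a} (RTree.node l r) (.leaf a), if_neg h1, ins_leaf b {a} a, if_pos rfl,
          ins_node a {b} (RTree.node l r) (.leaf b), if_neg h2, ins_leaf a {b} b, if_pos rfl,
          ins_eq_of_disjoint (Finset.singleton_nonempty a) hda,
          ins_eq_of_disjoint (Finset.singleton_nonempty b) hdb]
        exact .node (.refl _) (.swap (.refl _) (.refl _))
      · rw [ins_node a S l r, if_neg hcS, ins_node b S l r, if_neg hcS,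
          ins_node b {a} (ins a S l) (ins a S r), if_neg (hne a a S ha.1 ha.2),
          ins_node a {b} (ins b S l) (ins b S r), if_neg (hne b b S hb.1 hb.2)]
        exact .node (ihl ha.1 hb.1) (ihr ha.2 hb.2)


/-! #### Sibling and parent subtrees -/

def sib (a : α) : RTree α → Finset α
  | .leaf _ => ∅
  | .node l r =>
      if l = .leaf a then leafSet r
      else if r = .leaf a then leafSet l
      else if a ∈ l.leaves then sib a l else sib a r

theorem sib_node (a : α) (l r : RTree α) :
    sib a (.node l r) =
      if l = .leaf a then leafSet r
      else if r = .leaf a then leafSet l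
      else if a ∈ l.leaves then sib a l else sib a r := rfl

def par (a : α) : RTree α → Finset α
  | .leaf _ => ∅
  | .node l r =>
      if l = .leaf a ∨ r = .leaf a then leafSet (.node l r)
      else if a ∈ l.leaves then par a l else par a r

theorem par_node (a : α) (l r : RTree α) :
    par a (.node l r) =
      if l = .leaf a ∨ r = .leaf a then leafSet (.node l r)
      else if a ∈ l.leaves then par a l else par a r := rfl

theorem two_le_card_node (l r : RTree α) : 2 ≤ Multiset.card (RTree.node l r).leaves := by
  have h1 := leaves_card_pos l
  have h2 := leaves_card_pos r
  simp only [leaves, Multiset.card_add]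
  omega

theorem node_two_le_card {a : α} {t : RTree α} (ht : t ≠ .leaf a) (ha : a ∈ t.leaves) :
    2 ≤ Multiset.card t.leaves := by
  cases t with
  | leaf b =>
      simp only [leaves, Multiset.mem_singleton] at ha
      exact absurd (by rw [ha]) ht
  | node l r => exact two_le_card_node l r

theorem sib_subset {a : α} : ∀ {t : RTree α}, sib a t ⊆ leafSet t
  | .leaf b => by simp [sib]
  | .node l r => by
      rw [sib_node]
      split_ifs with h1 h2 h3
      · simp only [leafSet_node]; exact Finset.subset_union_right
      · simp only [leafSet_node]; exact Finset.subset_union_left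
      · exact sib_subset.trans (by simp only [leafSet_node]; exact Finset.subset_union_left)
      · exact sib_subset.trans (by simp only [leafSet_node]; exact Finset.subset_union_right)

theorem sib_nonempty {a : α} : ∀ {t : RTree α}, a ∈ t.leaves →
    2 ≤ Multiset.card t.leaves → (sib a t).Nonempty
  | .leaf b, _, h2 => by simp [leaves] at h2
  | .node l r, ha, _ => by
      rw [sib_node]
      split_ifs with h1 h2 h3
      · exact leafSet_nonempty r
      · exact leafSet_nonempty l
      · exact sib_nonempty h3 (node_two_le_card h1 h3)
      · have har : a ∈ r.leaves := by
          simp only [leaves, Multiset.mem_add] at ha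
          tauto
        exact sib_nonempty har (node_two_le_card h2 har)

theorem mem_of_mem_sib {a x : α} {t : RTree α} (h : x ∈ sib a t) : x ∈ t.leaves :=
  mem_leafSet.1 (sib_subset h)

theorem sib_ins {a : α} {S : Finset α} : ∀ {t : RTree α}, t.leaves.Nodup → a ∉ t.leaves →
    S ∈ subs t → sib a (ins a S t) = S
  | .leaf b, _, ha, hS => by
      simp only [leaves, Multiset.mem_singleton] at ha
      simp only [subs_leaf, Finset.mem_singleton] at hS
      rw [ins_leaf, if_pos hS.symm, sib_node, if_neg (by intro h; cases h; exact ha rfl),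
        if_pos rfl, hS, leafSet_leaf]
  | .node l r, hn, ha, hS => by
      obtain ⟨hnl, hnr, -⟩ := nodup_node hn
      have hd := leafSet_disjoint_of_nodup hn
      simp only [leaves, Multiset.mem_add, not_or] at ha
      obtain ⟨hal, har⟩ := ha
      rw [ins_node]
      split_ifs with htop
      · rw [sib_node, if_neg (by intro h; cases h), if_pos rfl, htop]
      · simp only [subs_node, Finset.mem_insert, Finset.mem_union] at hS
        rcases hS with hS | hS | hS
        · exact absurd hS.symm htop
        · have hSr : S ∉ subs r := not_mem_subs_of_disjoint (nonempty_of_mem_subs hS)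
            (Finset.disjoint_of_subset_left (subset_of_mem_subs hS) hd)
          rw [ins_of_not_mem_subs hSr, sib_node, if_neg (ins_ne_leaf hal),
            if_neg (ne_leaf_of_not_mem har), if_pos ((mem_leaves_ins_iff hal).2 hS)]
          exact sib_ins hnl hal hS
        · have hSl : S ∉ subs l := not_mem_subs_of_disjoint (nonempty_of_mem_subs hS)
            (Finset.disjoint_of_subset_left (subset_of_mem_subs hS) hd.symm)
          rw [ins_of_not_mem_subs hSl, sib_node, if_neg (ne_leaf_of_not_mem hal),
            if_neg (ins_ne_leaf har), if_neg hal]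
          exact sib_ins hnr har hS

theorem teq_ins_sib_del {a : α} : ∀ {t : RTree α}, t.leaves.Nodup → a ∈ t.leaves →
    2 ≤ Multiset.card t.leaves → TEquiv (ins a (sib a t) (del a t)) t := by
  intro t
  induction t with
  | leaf b => intro _ _ h2; simp [leaves] at h2
  | node l r ihl ihr =>
      intro hn ha _
      obtain ⟨hnl, hnr, hdlr⟩ := nodup_node hn
      have hd := leafSet_disjoint_of_nodup hn
      rw [sib_node, del_node]
      split_ifs with h1 h2 h3
      · rw [ins_self]
        subst h1
        exact .swap (.refl r) (.refl (.leaf a))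
      · rw [ins_self]
        subst h2
        exact .refl _
      · have hlnode : 2 ≤ Multiset.card l.leaves := node_two_le_card h1 h3
        have hsl : (sib a l).Nonempty := sib_nonempty h3 hlnode
        have hsub : sib a l ⊆ leafSet l := sib_subset
        have hdisj : Disjoint (sib a l) (leafSet r) :=
          Finset.disjoint_of_subset_left hsub hd
        have htop : leafSet (RTree.node (del a l) r) ≠ sib a l := by
          intro h
          obtain ⟨x, hx⟩ := leafSet_nonempty r
          have hxs : x ∈ sib a l := by
            rw [← h]
            simp only [leafSet_node, Finset.mem_union]
            exact Or.inr hx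
          exact Finset.disjoint_left.1 hdisj hxs hx
        rw [ins_node a _ (del a l) r, if_neg htop, ins_eq_of_disjoint hsl hdisj]
        exact .node (ihl hnl h3 hlnode) (.refl r)
      · have har : a ∈ r.leaves := by
          simp only [leaves, Multiset.mem_add] at ha
          tauto
        have hrnode : 2 ≤ Multiset.card r.leaves := node_two_le_card h2 har
        have hsr : (sib a r).Nonempty := sib_nonempty har hrnode
        have hsub : sib a r ⊆ leafSet r := sib_subset
        have hdisj : Disjoint (sib a r) (leafSet l) :=
          Finset.disjoint_of_subset_left hsub hd.symm
        have htop : leafSet (RTree.node l (del a r)) ≠ sib a r := by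
          intro h
          obtain ⟨x, hx⟩ := leafSet_nonempty l
          have hxs : x ∈ sib a r := by
            rw [← h]
            simp only [leafSet_node, Finset.mem_union]
            exact Or.inl hx
          exact Finset.disjoint_left.1 hdisj hxs hx
        rw [ins_node a _ l (del a r), if_neg htop, ins_eq_of_disjoint hsr hdisj]
        exact .node (.refl l) (ihr hnr har hrnode)

theorem sib_mem_subs_del {a : α} : ∀ {t : RTree α}, t.leaves.Nodup → a ∈ t.leaves →
    2 ≤ Multiset.card t.leaves → sib a t ∈ subs (del a t)
  | .leaf b, _, _, h2 => by simp [leaves] at h2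
  | .node l r, hn, ha, _ => by
      obtain ⟨hnl, hnr, -⟩ := nodup_node hn
      rw [sib_node, del_node]
      split_ifs with h1 h2 h3
      · exact leafSet_mem_subs r
      · exact leafSet_mem_subs l
      · have := sib_mem_subs_del hnl h3 (node_two_le_card h1 h3)
        cases hdel : del a l with
        | leaf c => rw [hdel] at this; simp at this ⊢; tauto
        | node p q =>
            rw [hdel] at this
            simp only [subs_node, Finset.mem_insert, Finset.mem_union] at this ⊢
            tauto
      · have har : a ∈ r.leaves := by
          simp only [leaves, Multiset.mem_add] at ha
          tauto
        have := sib_mem_subs_del hnr har (node_two_le_card h2 har)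
        cases hdel : del a r with
        | leaf c => rw [hdel] at this; simp at this ⊢; tauto
        | node p q =>
            rw [hdel] at this
            simp only [subs_node, Finset.mem_insert, Finset.mem_union] at this ⊢
            tauto

theorem par_subset {a : α} : ∀ {t : RTree α}, par a t ⊆ leafSet t
  | .leaf b => by simp [par]
  | .node l r => by
      rw [par_node]
      split_ifs with h1 h2
      · exact Finset.Subset.refl _
      · exact par_subset.trans (by simp only [leafSet_node]; exact Finset.subset_union_left)
      · exact par_subset.trans (by simp only [leafSet_node]; exact Finset.subset_union_right)

theorem par_eq_insert_sib {a : α} : ∀ {t : RTree α}, a ∈ t.leaves →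
    2 ≤ Multiset.card t.leaves → par a t = insert a (sib a t)
  | .leaf b, _, h2 => by simp [leaves] at h2
  | .node l r, ha, _ => by
      rw [par_node, sib_node]
      by_cases h1 : l = .leaf a
      · rw [if_pos (Or.inl h1), if_pos h1, h1]
        simp [Finset.insert_eq, -Finset.singleton_union]
      · by_cases h2 : r = .leaf a
        · rw [if_pos (Or.inr h2), if_neg h1, if_pos h2, h2]
          simp only [leafSet_node, leafSet_leaf]
          rw [Finset.union_comm, Finset.insert_eq]
        · rw [if_neg (by tauto)]
          split_ifs with h3
          · exact par_eq_insert_sib h3 (node_two_le_card h1 h3)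
          · have har : a ∈ r.leaves := by
              simp only [leaves, Multiset.mem_add] at ha
              tauto
            exact par_eq_insert_sib har (node_two_le_card h2 har)

theorem par_mem_subs {a : α} : ∀ {t : RTree α}, a ∈ t.leaves →
    2 ≤ Multiset.card t.leaves → par a t ∈ subs t
  | .leaf b, _, h2 => by simp [leaves] at h2
  | .node l r, ha, _ => by
      rw [par_node]
      split_ifs with h1 h2
      · exact leafSet_mem_subs _
      · push_neg at h1
        have := par_mem_subs h2 (node_two_le_card h1.1 h2)
        simp only [subs_node, Finset.mem_insert, Finset.mem_union]
        tauto
      · push_neg at h1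
        have har : a ∈ r.leaves := by
          simp only [leaves, Multiset.mem_add] at ha
          tauto
        have := par_mem_subs har (node_two_le_card h1.2 har)
        simp only [subs_node, Finset.mem_insert, Finset.mem_union]
        tauto

theorem mem_par {a : α} {t : RTree α} (ha : a ∈ t.leaves)
    (h2 : 2 ≤ Multiset.card t.leaves) : a ∈ par a t := by
  rw [par_eq_insert_sib ha h2]
  exact Finset.mem_insert_self _ _

theorem par_eq_par {a b : α} : ∀ {t : RTree α}, t.leaves.Nodup → a ∈ t.leaves →
    b ∈ t.leaves → a ≠ b → par a t = par b t → sib a t = {b} := by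
  intro t
  induction t with
  | leaf c =>
      intro _ ha hb hab _
      simp only [leaves, Multiset.mem_singleton] at ha hb
      exact absurd (ha.trans hb.symm) hab
  | node l r ihl ihr =>
      intro hn ha hb hab hpp
      obtain ⟨hnl, hnr, hdlr⟩ := nodup_node hn
      have hd := leafSet_disjoint_of_nodup hn
      have hstrict : ∀ (c : α) (u v : RTree α), c ∈ u.leaves →
          Disjoint (leafSet u) (leafSet v) → 2 ≤ Multiset.card u.leaves →
          par c u ≠ leafSet (RTree.node u v) := by
        intro c u v hcu hduv h2u h
        obtain ⟨x, hx⟩ := leafSet_nonempty v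
        have : x ∈ par c u := by
          rw [h]; simp only [leafSet_node, Finset.mem_union]; exact Or.inr hx
        exact Finset.disjoint_left.1 hduv (par_subset this) hx
      rw [par_node, par_node] at hpp
      rw [sib_node]
      by_cases h1 : l = .leaf a ∨ r = .leaf a
      · rw [if_pos h1] at hpp
        by_cases h2 : l = .leaf b ∨ r = .leaf b
        · rcases h1 with h1 | h1 <;> rcases h2 with h2 | h2
          · rw [h1] at h2; cases h2; exact absurd rfl hab
          · rw [if_pos h1, h2]; rfl
          · rw [if_neg, if_pos h1, h2]
            · rfl
            · rw [h2]; intro h; cases h; exact absurd rfl hab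
          · rw [h1] at h2; cases h2; exact absurd rfl hab
        · rw [if_neg h2] at hpp
          push_neg at h2
          exfalso
          by_cases h3 : b ∈ l.leaves
          · rw [if_pos h3] at hpp
            exact hstrict b l r h3 hd (node_two_le_card h2.1 h3) hpp.symm
          · have hbr : b ∈ r.leaves := by
              simp only [leaves, Multiset.mem_add] at hb
              tauto
            rw [if_neg h3] at hpp
            have : par b r ≠ leafSet (RTree.node r l) := by
              exact hstrict b r l hbr hd.symm (node_two_le_card h2.2 hbr)
            apply this
            rw [← hpp]
            simp only [leafSet_node]
            rw [Finset.union_comm]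
      · rw [if_neg h1] at hpp
        push_neg at h1
        rw [if_neg h1.1, if_neg h1.2]
        by_cases h2 : l = .leaf b ∨ r = .leaf b
        · rw [if_pos h2] at hpp
          exfalso
          by_cases h3 : a ∈ l.leaves
          · rw [if_pos h3] at hpp
            exact hstrict a l r h3 hd (node_two_le_card h1.1 h3) hpp
          · have har : a ∈ r.leaves := by
              simp only [leaves, Multiset.mem_add] at ha
              tauto
            rw [if_neg h3] at hpp
            have : par a r ≠ leafSet (RTree.node r l) := by
              exact hstrict a r l har hd.symm (node_two_le_card h1.2 har)
            apply this
            rw [hpp]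
            simp only [leafSet_node]
            rw [Finset.union_comm]
        · rw [if_neg h2] at hpp
          push_neg at h2
          by_cases h3 : a ∈ l.leaves
          · rw [if_pos h3] at hpp ⊢
            by_cases h4 : b ∈ l.leaves
            · rw [if_pos h4] at hpp
              exact ihl hnl h3 h4 hab hpp
            · exfalso
              have hbr : b ∈ r.leaves := by
                simp only [leaves, Multiset.mem_add] at hb
                tauto
              rw [if_neg h4] at hpp
              have hma : a ∈ par a l := mem_par h3 (node_two_le_card h1.1 h3)
              rw [hpp] at hma
              exact Finset.disjoint_left.1 hd (mem_leafSet.2 h3) (par_subset hma)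
          · have har : a ∈ r.leaves := by
              simp only [leaves, Multiset.mem_add] at ha
              tauto
            rw [if_neg h3] at hpp ⊢
            by_cases h4 : b ∈ l.leaves
            · exfalso
              rw [if_pos h4] at hpp
              have hmb : b ∈ par b l := mem_par h4 (node_two_le_card h2.1 h4)
              rw [← hpp] at hmb
              exact Finset.disjoint_left.1 hd (mem_leafSet.2 h4) (par_subset hmb)
            · have hbr : b ∈ r.leaves := by
                simp only [leaves, Multiset.mem_add] at hb
                tauto
              rw [if_neg h4] at hpp
              exact ihr hnr har hbr hab hpp


/-! #### Pair trees and commuting deletions -/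

theorem count_le_one_of_nodup {t : RTree α} (hn : t.leaves.Nodup) (a : α) :
    t.leaves.count a ≤ 1 := Multiset.nodup_iff_count_le_one.1 hn a

theorem leaves_del_nodup {a : α} {t : RTree α} (hn : t.leaves.Nodup) (ht : t ≠ .leaf a) :
    (del a t).leaves = t.leaves.erase a :=
  leaves_del (count_le_one_of_nodup hn a) ht

theorem nodup_del {a : α} {t : RTree α} (hn : t.leaves.Nodup) : (del a t).leaves.Nodup := by
  by_cases ht : t = .leaf a
  · subst ht; exact hn
  · rw [leaves_del_nodup hn ht]; exact hn.erase a

theorem leaves_del_subset {a : α} : ∀ {t : RTree α} {x : α},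
    x ∈ (del a t).leaves → x ∈ t.leaves
  | .leaf b, x, h => h
  | .node l r, x, h => by
      rw [del_node] at h
      simp only [leaves, Multiset.mem_add] at *
      split_ifs at h with h1 h2 h3
      · tauto
      · tauto
      · simp only [leaves, Multiset.mem_add] at h
        rcases h with h | h
        · exact Or.inl (leaves_del_subset h)
        · tauto
      · simp only [leaves, Multiset.mem_add] at h
        rcases h with h | h
        · tauto
        · exact Or.inr (leaves_del_subset h)

theorem mem_leaves_del {x a : α} {t : RTree α} (hn : t.leaves.Nodup) (ht : t ≠ .leaf a)
    (hx : x ∈ t.leaves) (hxa : x ≠ a) : x ∈ (del a t).leaves := by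
  rw [leaves_del_nodup hn ht]
  exact (Multiset.mem_erase_of_ne hxa).2 hx

theorem eq_leaf_of_leafSet {t : RTree α} {b : α} (hn : t.leaves.Nodup)
    (h : leafSet t = {b}) : t = .leaf b := by
  have hcard : Multiset.card t.leaves = 1 := by
    rw [← leafSet_card hn, h, Finset.card_singleton]
  obtain ⟨c, hc⟩ := Multiset.card_eq_one.1 hcard
  have hcb : c = b := by
    have : leafSet t = {c} := by
      rw [leafSet, hc]; rfl
    rw [this] at h
    exact Finset.singleton_inj.1 h
  exact eq_leaf_of_leaves_eq (by rw [hc, hcb])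

theorem eq_node_of_leaves_pair {t : RTree α} {a b : α} (h : t.leaves = a ::ₘ {b}) :
    t = .node (.leaf a) (.leaf b) ∨ t = .node (.leaf b) (.leaf a) := by
  cases t with
  | leaf c =>
      exfalso
      have := congrArg Multiset.card h
      simp [leaves] at this
  | node l r =>
      have hcard : Multiset.card l.leaves + Multiset.card r.leaves = 2 := by
        have := congrArg Multiset.card h
        simpa [leaves] using this
      have h1 := leaves_card_pos l
      have h2 := leaves_card_pos r
      have hl1 : Multiset.card l.leaves = 1 := by omega
      have hr1 : Multiset.card r.leaves = 1 := by omega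
      obtain ⟨c, hc⟩ := Multiset.card_eq_one.1 hl1
      obtain ⟨d, hd⟩ := Multiset.card_eq_one.1 hr1
      have hlc := eq_leaf_of_leaves_eq hc
      have hrd := eq_leaf_of_leaves_eq hd
      have hsum : c ::ₘ {d} = a ::ₘ {b} := by
        have : leaves (RTree.node l r) = ({c} : Multiset α) + {d} := by
          simp only [leaves, hc, hd]
        rw [this] at h
        rw [← h, Multiset.singleton_add]
      rcases Multiset.cons_eq_cons.1 hsum with ⟨hca, hdb⟩ | ⟨hca, cs, hcs1, hcs2⟩
      · left
        rw [hlc, hrd, hca, Multiset.singleton_inj.1 hdb]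
      · have hcs0 : cs = 0 := by
          have := congrArg Multiset.card hcs1
          rw [Multiset.card_singleton, Multiset.card_cons] at this
          exact Multiset.card_eq_zero.1 (by omega)
        subst hcs0
        simp only [Multiset.cons_zero, Multiset.singleton_inj] at hcs1 hcs2
        right
        rw [hlc, hrd, hcs1, hcs2]

theorem del_pair₁ (a b : α) :
    del a (.node (.leaf a) (.leaf b)) = .leaf b := by rw [del_node, if_pos rfl]

theorem del_pair₂ {a b : α} (hab : b ≠ a) :
    del a (.node (.leaf b) (.leaf a)) = .leaf b := by
  rw [del_node, if_neg (by intro h; cases h; exact hab rfl), if_pos rfl]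

theorem sib_pair₁ (a x : α) : sib a (.node (.leaf a) (.leaf x)) = {x} := by
  rw [sib_node, if_pos rfl, leafSet_leaf]

theorem sib_pair₂ {a x : α} (h : x ≠ a) : sib a (.node (.leaf x) (.leaf a)) = {x} := by
  rw [sib_node, if_neg (by intro he; cases he; exact h rfl), if_pos rfl, leafSet_leaf]

theorem pair_of_del_eq_leaf {t : RTree α} {a b : α} (hn : t.leaves.Nodup)
    (hb : b ∈ t.leaves) (hab : a ≠ b) (h : del b t = .leaf a) :
    t = .node (.leaf a) (.leaf b) ∨ t = .node (.leaf b) (.leaf a) := by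
  have ht : t ≠ .leaf b := by
    intro he
    rw [he, del_leaf] at h
    cases h
    exact hab rfl
  have hl := leaves_del_nodup hn ht
  rw [h] at hl
  have hpair : t.leaves = b ::ₘ ({a} : Multiset α) := by
    rw [← Multiset.cons_erase hb, ← hl]
    rfl
  rcases eq_node_of_leaves_pair hpair with hp | hp
  · right; exact hp
  · left; exact hp

theorem del_two_eq_leaf {l : RTree α} {a b : α} (hn : l.leaves.Nodup) (ha : a ∈ l.leaves)
    (hb : b ∈ l.leaves) (hab : a ≠ b) (h : del a l ≠ .leaf b) : del b l ≠ .leaf a := by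
  intro hc
  rcases pair_of_del_eq_leaf hn hb hab hc with hp | hp
  · rw [hp, del_pair₁] at h
    exact h rfl
  · rw [hp, del_pair₂ (Ne.symm hab)] at h
    exact h rfl


theorem card_ge_three {l : RTree α} {a b : α} (hn : l.leaves.Nodup) (ha : a ∈ l.leaves)
    (hb : b ∈ l.leaves) (hab : a ≠ b) (h : del b l ≠ .leaf a) :
    3 ≤ Multiset.card l.leaves := by
  by_contra hcon
  push_neg at hcon
  have h1 : a ∈ l.leaves.erase b := (Multiset.mem_erase_of_ne hab).2 ha
  have h2 : 1 ≤ Multiset.card (l.leaves.erase b) := Multiset.one_le_count_iff_mem.2 h1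
    |>.trans (Multiset.count_le_card a _)
  have h3 : Multiset.card (l.leaves.erase b) = Multiset.card l.leaves - 1 :=
    Multiset.card_erase_of_mem hb
  have hcard2 : Multiset.card (l.leaves.erase b) = 1 := by omega
  obtain ⟨c, hc⟩ := Multiset.card_eq_one.1 hcard2
  have hca : c = a := by
    rw [hc, Multiset.mem_singleton] at h1
    exact h1.symm
  subst hca
  have hpair : l.leaves = b ::ₘ ({c} : Multiset α) := by
    rw [← Multiset.cons_erase hb, hc]
  rcases eq_node_of_leaves_pair hpair with hp | hp
  · rw [hp, del_pair₁] at h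
    exact h rfl
  · rw [hp, del_pair₂ hab] at h
    exact h rfl

theorem del_comm {a b : α} (hab : a ≠ b) : ∀ {t : RTree α}, t.leaves.Nodup →
    3 ≤ Multiset.card t.leaves → del a (del b t) = del b (del a t) := by
  intro t
  induction t with
  | leaf c => intro _ h3; simp [leaves] at h3
  | node l r ihl ihr =>
      intro hn h3
      by_cases hbm : b ∈ (RTree.node l r).leaves
      case neg =>
        rw [del_of_not_mem hbm, del_of_not_mem (fun h => hbm (leaves_del_subset h))]
      by_cases ham : a ∈ (RTree.node l r).leaves
      case neg =>
        rw [del_of_not_mem ham, del_of_not_mem (fun h => ham (leaves_del_subset h))]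
      obtain ⟨hnl, hnr, hdlr⟩ := nodup_node hn
      have hcards : Multiset.card (RTree.node l r).leaves
          = Multiset.card l.leaves + Multiset.card r.leaves := by simp [leaves]
      have hlpos := leaves_card_pos l
      have hrpos := leaves_card_pos r
      by_cases hb1 : l = .leaf b
      · have har : a ∈ r.leaves := by
          simp only [leaves, Multiset.mem_add] at ham
          rcases ham with h | h
          · exfalso; rw [hb1] at h; simp [leaves] at h; exact hab h
          · exact h
        have hra : r ≠ .leaf a := by
          intro he
          rw [hb1, he] at h3
          simp [leaves] at h3
        rw [del_node b l r, if_pos hb1, del_node a l r,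
          if_neg (by rw [hb1]; intro h; cases h; exact hab rfl), if_neg hra,
          if_neg (by rw [hb1]; simp only [leaves, Multiset.mem_singleton]; exact hab),
          del_node b l (del a r), if_pos hb1]
      · by_cases hb2 : r = .leaf b
        · have hal : a ∈ l.leaves := by
            simp only [leaves, Multiset.mem_add] at ham
            rcases ham with h | h
            · exact h
            · exfalso; rw [hb2] at h; simp [leaves] at h; exact hab h
          have hbnl : b ∉ l.leaves := by
            intro h
            have : b ∈ r.leaves := by rw [hb2]; simp [leaves]
            exact Multiset.disjoint_left.1 hdlr h this
          have hla : l ≠ .leaf a := by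
            intro he
            rw [hb2, he] at h3
            simp [leaves] at h3
          rw [del_node b l r, if_neg hb1, if_pos hb2, del_node a l r, if_neg hla,
            if_neg (by rw [hb2]; intro h; cases h; exact hab rfl), if_pos hal,
            del_node b (del a l) r, if_neg (by
              intro h
              have : b ∈ (del a l).leaves := by rw [h]; simp [leaves]
              exact hbnl (leaves_del_subset this)), if_pos hb2]
        · by_cases hb3 : b ∈ l.leaves
          · have hbnr : b ∉ r.leaves := fun h => Multiset.disjoint_left.1 hdlr hb3 h
            rw [del_node b l r, if_neg hb1, if_neg hb2, if_pos hb3]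
            by_cases ha3 : a ∈ l.leaves
            · have hanr : a ∉ r.leaves := fun h => Multiset.disjoint_left.1 hdlr ha3 h
              have hlna : l ≠ .leaf a := by
                intro he
                rw [he] at hb3
                simp only [leaves, Multiset.mem_singleton] at hb3
                exact hab hb3.symm
              by_cases hpair : del b l = .leaf a
              · rcases pair_of_del_eq_leaf hnl hb3 hab hpair with hp | hp
                · rw [hpair, del_node a (.leaf a) r, if_pos rfl, del_node a l r,
                    if_neg hlna, if_neg (ne_leaf_of_not_mem hanr), if_pos ha3, hp, del_pair₁,
                    del_node b (.leaf b) r, if_pos rfl]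
                · rw [hpair, del_node a (.leaf a) r, if_pos rfl, del_node a l r,
                    if_neg hlna, if_neg (ne_leaf_of_not_mem hanr), if_pos ha3, hp,
                    del_pair₂ (Ne.symm hab), del_node b (.leaf b) r, if_pos rfl]
              · have hpair2 : del a l ≠ .leaf b := del_two_eq_leaf hnl hb3 ha3 hab.symm hpair
                have hamem : a ∈ (del b l).leaves := mem_leaves_del hnl hb1 ha3 hab
                have hbmem : b ∈ (del a l).leaves := mem_leaves_del hnl hlna hb3 hab.symm
                rw [del_node a (del b l) r, if_neg hpair, if_neg (ne_leaf_of_not_mem hanr),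
                  if_pos hamem,
                  del_node a l r, if_neg hlna, if_neg (ne_leaf_of_not_mem hanr), if_pos ha3,
                  del_node b (del a l) r, if_neg hpair2, if_neg hb2, if_pos hbmem,
                  ihl hnl (card_ge_three hnl ha3 hb3 hab hpair)]
            · have har : a ∈ r.leaves := by
                simp only [leaves, Multiset.mem_add] at ham
                tauto
              have hdba : del b l ≠ .leaf a := by
                intro h
                have : a ∈ (del b l).leaves := by rw [h]; simp [leaves]
                exact ha3 (leaves_del_subset this)
              by_cases hra : r = .leaf a
              · rw [del_node a (del b l) r, if_neg hdba, if_pos hra, del_node a l r,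
                  if_neg (ne_leaf_of_not_mem ha3), if_pos hra]
              · have hnal : a ∉ (del b l).leaves := fun h => ha3 (leaves_del_subset h)
                rw [del_node a (del b l) r, if_neg hdba, if_neg hra, if_neg hnal,
                  del_node a l r, if_neg (ne_leaf_of_not_mem ha3), if_neg hra, if_neg ha3,
                  del_node b l (del a r), if_neg hb1, if_neg (by
                    intro h
                    have : b ∈ (del a r).leaves := by rw [h]; simp [leaves]
                    exact hbnr (leaves_del_subset this)), if_pos hb3]
          · have hbr : b ∈ r.leaves := by
              simp only [leaves, Multiset.mem_add] at hbm
              tauto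
            have hbnl : b ∉ l.leaves := hb3
            rw [del_node b l r, if_neg hb1, if_neg hb2, if_neg hb3]
            by_cases ha3 : a ∈ l.leaves
            · have hanr : a ∉ r.leaves := fun h => Multiset.disjoint_left.1 hdlr ha3 h
              by_cases hla : l = .leaf a
              · rw [del_node a l (del b r), if_pos hla, del_node a l r, if_pos hla]
              · have hdra : del b r ≠ .leaf a := by
                  intro h
                  have : a ∈ (del b r).leaves := by rw [h]; simp [leaves]
                  exact hanr (leaves_del_subset this)
                rw [del_node a l (del b r), if_neg hla, if_neg hdra, if_pos ha3,
                  del_node a l r, if_neg hla, if_neg (ne_leaf_of_not_mem hanr), if_pos ha3,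
                  del_node b (del a l) r, if_neg (by
                    intro h
                    have : b ∈ (del a l).leaves := by rw [h]; simp [leaves]
                    exact hbnl (leaves_del_subset this)), if_neg hb2, if_neg (by
                    intro h
                    exact hbnl (leaves_del_subset h))]
            · have har : a ∈ r.leaves := by
                simp only [leaves, Multiset.mem_add] at ham
                tauto
              have hrna : r ≠ .leaf a := by
                intro he
                rw [he] at hbr
                simp only [leaves, Multiset.mem_singleton] at hbr
                exact hab hbr.symm
              by_cases hpair : del b r = .leaf a
              · rcases pair_of_del_eq_leaf hnr hbr hab hpair with hp | hp
                · rw [hpair, del_node a l (.leaf a), if_neg (ne_leaf_of_not_mem ha3),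
                    if_pos rfl, del_node a l r, if_neg (ne_leaf_of_not_mem ha3),
                    if_neg hrna, if_neg ha3, hp, del_pair₁,
                    del_node b l (.leaf b), if_neg hb1, if_pos rfl]
                · rw [hpair, del_node a l (.leaf a), if_neg (ne_leaf_of_not_mem ha3),
                    if_pos rfl, del_node a l r, if_neg (ne_leaf_of_not_mem ha3),
                    if_neg hrna, if_neg ha3, hp, del_pair₂ (Ne.symm hab),
                    del_node b l (.leaf b), if_neg hb1, if_pos rfl]
              · have hpair2 : del a r ≠ .leaf b := del_two_eq_leaf hnr hbr har hab.symm hpair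
                have hamem : a ∈ (del b r).leaves := mem_leaves_del hnr hb2 har hab
                have hbmem : b ∈ (del a r).leaves := mem_leaves_del hnr hrna hbr hab.symm
                rw [del_node a l (del b r), if_neg (ne_leaf_of_not_mem ha3), if_neg hpair,
                  if_neg ha3,
                  del_node a l r, if_neg (ne_leaf_of_not_mem ha3), if_neg hrna, if_neg ha3,
                  del_node b l (del a r), if_neg hb1, if_neg hpair2, if_neg hb3,
                  ihr hnr (card_ge_three hnr har hbr hab hpair)]


theorem sib_of_pair {a x : α} {l : RTree α} (hax : x ≠ a)
    (hp : l = .node (.leaf a) (.leaf x) ∨ l = .node (.leaf x) (.leaf a)) :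
    sib a l = {x} := by
  rcases hp with hp | hp
  · rw [hp, sib_pair₁]
  · rw [hp, sib_pair₂ hax]

theorem sib_del {x a : α} : ∀ {t : RTree α}, t.leaves.Nodup → a ∈ t.leaves →
    a ≠ x → x ∉ sib a t → sib a (del x t) = sib a t := by
  intro t
  induction t with
  | leaf c => intro _ _ _ _; rfl
  | node l r ihl ihr =>
      intro hn ha hax hxs
      by_cases hx : x ∈ (RTree.node l r).leaves
      case neg => rw [del_of_not_mem hx]
      obtain ⟨hnl, hnr, hdlr⟩ := nodup_node hn
      by_cases h1 : l = .leaf a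
      · exfalso
        rw [sib_node, if_pos h1] at hxs
        simp only [leaves, Multiset.mem_add] at hx
        rcases hx with h | h
        · rw [h1] at h; simp only [leaves, Multiset.mem_singleton] at h
          exact hax h.symm
        · exact hxs (mem_leafSet.2 h)
      · by_cases h2 : r = .leaf a
        · exfalso
          rw [sib_node, if_neg h1, if_pos h2] at hxs
          simp only [leaves, Multiset.mem_add] at hx
          rcases hx with h | h
          · exact hxs (mem_leafSet.2 h)
          · rw [h2] at h; simp only [leaves, Multiset.mem_singleton] at h
            exact hax h.symm
        · by_cases h3 : a ∈ l.leaves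
          · rw [sib_node, if_neg h1, if_neg h2, if_pos h3] at hxs ⊢
            have hanr : a ∉ r.leaves := fun h => Multiset.disjoint_left.1 hdlr h3 h
            by_cases hxl : x ∈ l.leaves
            · have hlnx : l ≠ .leaf x := by
                intro he
                rw [he] at h3
                simp only [leaves, Multiset.mem_singleton] at h3
                exact hax h3
              have hxnr : x ∉ r.leaves := fun h => Multiset.disjoint_left.1 hdlr hxl h
              have hda : del x l ≠ .leaf a := by
                intro h
                apply hxs
                rw [sib_of_pair (Ne.symm hax) (pair_of_del_eq_leaf hnl hxl hax h)]
                simp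
              rw [del_node x l r, if_neg hlnx, if_neg (ne_leaf_of_not_mem hxnr), if_pos hxl,
                sib_node, if_neg hda, if_neg (ne_leaf_of_not_mem hanr),
                if_pos (mem_leaves_del hnl hlnx h3 hax)]
              exact ihl hnl h3 hax hxs
            · have hxr : x ∈ r.leaves := by
                simp only [leaves, Multiset.mem_add] at hx
                tauto
              by_cases hrx : r = .leaf x
              · rw [del_node x l r, if_neg (ne_leaf_of_not_mem hxl), if_pos hrx]
              · have hdra : del x r ≠ .leaf a := by
                  intro h
                  have : a ∈ (del x r).leaves := by rw [h]; simp [leaves]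
                  exact hanr (leaves_del_subset this)
                rw [del_node x l r, if_neg (ne_leaf_of_not_mem hxl), if_neg hrx, if_neg hxl,
                  sib_node, if_neg h1, if_neg hdra, if_pos h3]
          · have har : a ∈ r.leaves := by
              simp only [leaves, Multiset.mem_add] at ha
              tauto
            rw [sib_node, if_neg h1, if_neg h2, if_neg h3] at hxs ⊢
            by_cases hxl : x ∈ l.leaves
            · have hxnr : x ∉ r.leaves := fun h => Multiset.disjoint_left.1 hdlr hxl h
              by_cases hlx : l = .leaf x
              · rw [del_node x l r, if_pos hlx]
              · have hdla : del x l ≠ .leaf a := by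
                  intro h
                  have : a ∈ (del x l).leaves := by rw [h]; simp [leaves]
                  exact h3 (leaves_del_subset this)
                rw [del_node x l r, if_neg hlx, if_neg (ne_leaf_of_not_mem hxnr), if_pos hxl,
                  sib_node, if_neg hdla, if_neg h2,
                  if_neg (fun h => h3 (leaves_del_subset h))]
            · have hxr : x ∈ r.leaves := by
                simp only [leaves, Multiset.mem_add] at hx
                tauto
              have hrnx : r ≠ .leaf x := by
                intro he
                rw [he] at har
                simp only [leaves, Multiset.mem_singleton] at har
                exact hax har
              have hda : del x r ≠ .leaf a := by
                intro h
                apply hxs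
                rw [sib_of_pair (Ne.symm hax) (pair_of_del_eq_leaf hnr hxr hax h)]
                simp
              rw [del_node x l r, if_neg (ne_leaf_of_not_mem hxl), if_neg hrnx, if_neg hxl,
                sib_node, if_neg h1, if_neg hda, if_neg h3]
              exact ihr hnr har hax hxs


theorem sib_cherry {a b : α} : ∀ {t : RTree α}, t.leaves.Nodup → a ∈ t.leaves → a ≠ b →
    sib a t = {b} → sib a (del b t) = sib b (del a t) := by
  intro t
  induction t with
  | leaf c =>
      intro _ _ _ hs
      exfalso
      exact Finset.singleton_ne_empty b (by rw [← hs]; rfl)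
  | node l r ihl ihr =>
      intro hn ha hab hs
      obtain ⟨hnl, hnr, hdlr⟩ := nodup_node hn
      by_cases h1 : l = .leaf a
      · rw [sib_node, if_pos h1] at hs
        have hrb : r = .leaf b := eq_leaf_of_leafSet hnr hs
        subst hrb
        rw [h1, del_node b (.leaf a) (.leaf b), if_neg (by intro h; cases h; exact hab rfl),
          if_pos rfl, del_pair₁]
        rfl
      · by_cases h2 : r = .leaf a
        · rw [sib_node, if_neg h1, if_pos h2] at hs
          have hlb : l = .leaf b := eq_leaf_of_leafSet hnl hs
          subst hlb
          rw [h2, del_node b (.leaf b) (.leaf a), if_pos rfl,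
            del_pair₂ (show b ≠ a from hab.symm)]
          rfl
        · by_cases h3 : a ∈ l.leaves
          · rw [sib_node, if_neg h1, if_neg h2, if_pos h3] at hs
            have hbl : b ∈ l.leaves := mem_of_mem_sib (by rw [hs]; simp)
            have hbnr : b ∉ r.leaves := fun h => Multiset.disjoint_left.1 hdlr hbl h
            have hanr : a ∉ r.leaves := fun h => Multiset.disjoint_left.1 hdlr h3 h
            have hlnb : l ≠ .leaf b := by
              intro he
              rw [he] at h3
              simp only [leaves, Multiset.mem_singleton] at h3
              exact hab h3
            rw [del_node b l r, if_neg hlnb, if_neg (ne_leaf_of_not_mem hbnr), if_pos hbl,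
              del_node a l r, if_neg h1, if_neg (ne_leaf_of_not_mem hanr), if_pos h3]
            by_cases hp : del b l = .leaf a
            · rcases pair_of_del_eq_leaf hnl hbl hab hp with hpp | hpp
              · rw [hp, hpp, del_pair₁, sib_node, if_pos rfl, sib_node b (.leaf b) r,
                  if_pos rfl]
              · rw [hp, hpp, del_pair₂ (show b ≠ a from hab.symm), sib_node, if_pos rfl,
                  sib_node b (.leaf b) r, if_pos rfl]
            · have hp2 : del a l ≠ .leaf b := del_two_eq_leaf hnl hbl h3 hab.symm hp
              rw [sib_node a (del b l) r, if_neg hp, if_neg (ne_leaf_of_not_mem hanr),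
                if_pos (mem_leaves_del hnl hlnb h3 hab),
                sib_node b (del a l) r, if_neg hp2, if_neg (ne_leaf_of_not_mem hbnr),
                if_pos (mem_leaves_del hnl h1 hbl hab.symm)]
              exact ihl hnl h3 hab hs
          · have har : a ∈ r.leaves := by
              simp only [leaves, Multiset.mem_add] at ha
              tauto
            rw [sib_node, if_neg h1, if_neg h2, if_neg h3] at hs
            have hbr : b ∈ r.leaves := mem_of_mem_sib (by rw [hs]; simp)
            have hbnl : b ∉ l.leaves := fun h => Multiset.disjoint_left.1 hdlr h hbr
            have hrnb : r ≠ .leaf b := by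
              intro he
              rw [he] at har
              simp only [leaves, Multiset.mem_singleton] at har
              exact hab har
            rw [del_node b l r, if_neg (ne_leaf_of_not_mem hbnl), if_neg hrnb, if_neg hbnl,
              del_node a l r, if_neg h1, if_neg h2, if_neg h3]
            by_cases hp : del b r = .leaf a
            · rcases pair_of_del_eq_leaf hnr hbr hab hp with hpp | hpp
              · rw [hp, hpp, del_pair₁, sib_node a l (.leaf a),
                  if_neg h1, if_pos rfl, sib_node b l (.leaf b),
                  if_neg (ne_leaf_of_not_mem hbnl), if_pos rfl]
              · rw [hp, hpp, del_pair₂ (show b ≠ a from hab.symm), sib_node a l (.leaf a),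
                  if_neg h1, if_pos rfl, sib_node b l (.leaf b),
                  if_neg (ne_leaf_of_not_mem hbnl), if_pos rfl]
            · have hp2 : del a r ≠ .leaf b := del_two_eq_leaf hnr hbr har hab.symm hp
              rw [sib_node a l (del b r), if_neg h1, if_neg hp, if_neg h3,
                sib_node b l (del a r), if_neg (ne_leaf_of_not_mem hbnl), if_neg hp2,
                if_neg hbnl]
              exact ihr hnr har hab hs


/-! #### Congruence under `TEquiv` -/

theorem TEquiv.leaf_eq' {a : α} {t : RTree α} (h : TEquiv t (.leaf a)) : t = .leaf a := by
  cases h; rfl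

theorem sib_of_not_mem {a : α} : ∀ {t : RTree α}, a ∉ t.leaves → sib a t = ∅
  | .leaf b, _ => rfl
  | .node l r, h => by
      simp only [leaves, Multiset.mem_add, not_or] at h
      rw [sib_node, if_neg (ne_leaf_of_not_mem h.1), if_neg (ne_leaf_of_not_mem h.2),
        if_neg h.1]
      exact sib_of_not_mem h.2

theorem TEquiv.leafSet_eq {t t' : RTree α} (h : TEquiv t t') : leafSet t = leafSet t' := by
  rw [leafSet, leafSet, h.leaves_eq]

theorem TEquiv.subs_eq {t t' : RTree α} (h : TEquiv t t') : subs t = subs t' := by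
  induction h with
  | leaf a => rfl
  | @node l r l' r' h1 h2 ih1 ih2 =>
      simp only [subs_node, ih1, ih2]
      rw [show leafSet (RTree.node l r) = leafSet (RTree.node l' r') from
        (TEquiv.node h1 h2).leafSet_eq]
  | @swap l r l' r' h1 h2 ih1 ih2 =>
      simp only [subs_node, ih1, ih2]
      rw [show leafSet (RTree.node l r) = leafSet (RTree.node l' r') from
        (TEquiv.swap h1 h2).leafSet_eq, Finset.union_comm]

theorem TEquiv.del_congr {a : α} {t t' : RTree α} (h : TEquiv t t')
    (hc : t.leaves.count a ≤ 1) : TEquiv (del a t) (del a t') := by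
  induction h with
  | leaf b => exact .refl _
  | @node l r l' r' h1 h2 ih1 ih2 =>
      have hcnt : l.leaves.count a + r.leaves.count a ≤ 1 := by
        simpa [leaves] using hc
      by_cases c1 : l = .leaf a
      · have c1' : l' = .leaf a := by rw [c1] at h1; exact h1.leaf_eq
        rw [del_node, if_pos c1, del_node, if_pos c1']
        exact h2
      · have c1' : l' ≠ .leaf a := fun he => c1 (TEquiv.leaf_eq' (he ▸ h1))
        by_cases c2 : r = .leaf a
        · have c2' : r' = .leaf a := by rw [c2] at h2; exact h2.leaf_eq
          rw [del_node, if_neg c1, if_pos c2, del_node, if_neg c1', if_pos c2']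
          exact h1
        · have c2' : r' ≠ .leaf a := fun he => c2 (TEquiv.leaf_eq' (he ▸ h2))
          by_cases c3 : a ∈ l.leaves
          · have c3' : a ∈ l'.leaves := h1.leaves_eq ▸ c3
            rw [del_node, if_neg c1, if_neg c2, if_pos c3,
              del_node, if_neg c1', if_neg c2', if_pos c3']
            exact .node (ih1 (le_trans (Nat.le_add_right _ _) hcnt)) h2
          · have c3' : a ∉ l'.leaves := fun hm => c3 (h1.leaves_eq ▸ hm)
            rw [del_node, if_neg c1, if_neg c2, if_neg c3,
              del_node, if_neg c1', if_neg c2', if_neg c3']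
            exact .node h1 (ih2 (le_trans (Nat.le_add_left _ _) hcnt))
  | @swap l r l' r' h1 h2 ih1 ih2 =>
      have hcnt : l.leaves.count a + r.leaves.count a ≤ 1 := by
        simpa [leaves] using hc
      by_cases c1 : l = .leaf a
      · have hr' : r' = .leaf a := by rw [c1] at h1; exact h1.leaf_eq
        have hra : a ∉ r.leaves := by
          have : l.leaves.count a = 1 := by rw [c1]; simp [leaves]
          intro hm
          have := Multiset.one_le_count_iff_mem.2 hm
          omega
        have hl' : l' ≠ .leaf a := by
          intro he
          have : r = .leaf a := TEquiv.leaf_eq' (he ▸ h2)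
          rw [this] at hra
          simp [leaves] at hra
        rw [del_node, if_pos c1, del_node, if_neg hl', if_pos hr']
        exact h2
      · have hr' : r' ≠ .leaf a := fun he => c1 (TEquiv.leaf_eq' (he ▸ h1))
        by_cases c2 : r = .leaf a
        · have hl' : l' = .leaf a := by rw [c2] at h2; exact h2.leaf_eq
          rw [del_node, if_neg c1, if_pos c2, del_node, if_pos hl']
          exact h1
        · have hl' : l' ≠ .leaf a := fun he => c2 (TEquiv.leaf_eq' (he ▸ h2))
          by_cases c3 : a ∈ l.leaves
          · have c3' : a ∉ l'.leaves := by
              have hcl := Multiset.one_le_count_iff_mem.2 c3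
              intro hm
              have : a ∈ r.leaves := h2.leaves_eq.symm ▸ hm
              have := Multiset.one_le_count_iff_mem.2 this
              omega
            rw [del_node, if_neg c1, if_neg c2, if_pos c3,
              del_node, if_neg hl', if_neg hr', if_neg c3']
            exact .swap (ih1 (le_trans (Nat.le_add_right _ _) hcnt)) h2
          · by_cases c4 : a ∈ r.leaves
            · have c4' : a ∈ l'.leaves := h2.leaves_eq ▸ c4
              rw [del_node, if_neg c1, if_neg c2, if_neg c3,
                del_node, if_neg hl', if_neg hr', if_pos c4']
              exact .swap h1 (ih2 (le_trans (Nat.le_add_left _ _) hcnt))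
            · have c4' : a ∉ l'.leaves := fun hm => c4 (h2.leaves_eq ▸ hm)
              rw [del_node, if_neg c1, if_neg c2, if_neg c3, del_of_not_mem c4,
                del_node, if_neg hl', if_neg hr', if_neg c4',
                del_of_not_mem (fun hm => c3 (h1.leaves_eq ▸ hm))]
              exact .swap h1 h2

theorem TEquiv.sib_congr {a : α} {t t' : RTree α} (h : TEquiv t t')
    (hc : t.leaves.count a ≤ 1) : sib a t = sib a t' := by
  induction h with
  | leaf b => rfl
  | @node l r l' r' h1 h2 ih1 ih2 =>
      have hcnt : l.leaves.count a + r.leaves.count a ≤ 1 := by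
        simpa [leaves] using hc
      by_cases c1 : l = .leaf a
      · have c1' : l' = .leaf a := by rw [c1] at h1; exact h1.leaf_eq
        rw [sib_node, if_pos c1, sib_node, if_pos c1', h2.leafSet_eq]
      · have c1' : l' ≠ .leaf a := fun he => c1 (TEquiv.leaf_eq' (he ▸ h1))
        by_cases c2 : r = .leaf a
        · have c2' : r' = .leaf a := by rw [c2] at h2; exact h2.leaf_eq
          rw [sib_node, if_neg c1, if_pos c2, sib_node, if_neg c1', if_pos c2',
            h1.leafSet_eq]
        · have c2' : r' ≠ .leaf a := fun he => c2 (TEquiv.leaf_eq' (he ▸ h2))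
          by_cases c3 : a ∈ l.leaves
          · have c3' : a ∈ l'.leaves := h1.leaves_eq ▸ c3
            rw [sib_node, if_neg c1, if_neg c2, if_pos c3,
              sib_node, if_neg c1', if_neg c2', if_pos c3']
            exact ih1 (le_trans (Nat.le_add_right _ _) hcnt)
          · have c3' : a ∉ l'.leaves := fun hm => c3 (h1.leaves_eq ▸ hm)
            rw [sib_node, if_neg c1, if_neg c2, if_neg c3,
              sib_node, if_neg c1', if_neg c2', if_neg c3']
            exact ih2 (le_trans (Nat.le_add_left _ _) hcnt)
  | @swap l r l' r' h1 h2 ih1 ih2 =>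
      have hcnt : l.leaves.count a + r.leaves.count a ≤ 1 := by
        simpa [leaves] using hc
      by_cases c1 : l = .leaf a
      · have hr' : r' = .leaf a := by rw [c1] at h1; exact h1.leaf_eq
        have hra : a ∉ r.leaves := by
          have : l.leaves.count a = 1 := by rw [c1]; simp [leaves]
          intro hm
          have := Multiset.one_le_count_iff_mem.2 hm
          omega
        have hl' : l' ≠ .leaf a := by
          intro he
          have : r = .leaf a := TEquiv.leaf_eq' (he ▸ h2)
          rw [this] at hra
          simp [leaves] at hra
        rw [sib_node, if_pos c1, sib_node, if_neg hl', if_pos hr', h2.leafSet_eq]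
      · have hr' : r' ≠ .leaf a := fun he => c1 (TEquiv.leaf_eq' (he ▸ h1))
        by_cases c2 : r = .leaf a
        · have hl' : l' = .leaf a := by rw [c2] at h2; exact h2.leaf_eq
          rw [sib_node, if_neg c1, if_pos c2, sib_node, if_pos hl', h1.leafSet_eq]
        · have hl' : l' ≠ .leaf a := fun he => c2 (TEquiv.leaf_eq' (he ▸ h2))
          by_cases c3 : a ∈ l.leaves
          · have c3' : a ∉ l'.leaves := by
              have hcl := Multiset.one_le_count_iff_mem.2 c3
              intro hm
              have : a ∈ r.leaves := h2.leaves_eq.symm ▸ hm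
              have := Multiset.one_le_count_iff_mem.2 this
              omega
            rw [sib_node, if_neg c1, if_neg c2, if_pos c3,
              sib_node, if_neg hl', if_neg hr', if_neg c3']
            exact ih1 (le_trans (Nat.le_add_right _ _) hcnt)
          · by_cases c4 : a ∈ r.leaves
            · have c4' : a ∈ l'.leaves := h2.leaves_eq ▸ c4
              rw [sib_node, if_neg c1, if_neg c2, if_neg c3,
                sib_node, if_neg hl', if_neg hr', if_pos c4']
              exact ih2 (le_trans (Nat.le_add_left _ _) hcnt)
            · have c4' : a ∉ l'.leaves := fun hm => c4 (h2.leaves_eq ▸ hm)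
              rw [sib_node, if_neg c1, if_neg c2, if_neg c3,
                sib_node, if_neg hl', if_neg hr', if_neg c4']
              rw [sib_of_not_mem c4, sib_of_not_mem
                (fun hm => c3 (h1.leaves_eq ▸ hm))]


/-! #### Equivariance under relabelling -/

section Relabel
variable {f : α → α} (hf : Function.Injective f)

theorem leaves_relabel : ∀ t : RTree α, (t.relabel f).leaves = t.leaves.map f
  | .leaf a => by simp [relabel, leaves]
  | .node l r => by
      simp only [relabel, leaves, Multiset.map_add, leaves_relabel l, leaves_relabel r]

include hf

theorem mem_leaves_relabel {a : α} {t : RTree α} :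
    f a ∈ (t.relabel f).leaves ↔ a ∈ t.leaves := by
  rw [leaves_relabel]
  exact Multiset.mem_map_of_injective hf

theorem leafSet_relabel (t : RTree α) :
    leafSet (t.relabel f) = (leafSet t).image f := by
  rw [leafSet, leafSet, leaves_relabel, Multiset.toFinset_map]

theorem relabel_eq_leaf_iff {a : α} {t : RTree α} :
    t.relabel f = .leaf (f a) ↔ t = .leaf a := by
  constructor
  · intro h
    cases t with
    | leaf b =>
        simp only [relabel, RTree.leaf.injEq] at h
        rw [hf h]
    | node l r => simp [relabel] at h
  · intro h; rw [h]; rfl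

theorem subs_relabel : ∀ t : RTree α,
    subs (t.relabel f) = (subs t).image (Finset.image f)
  | .leaf b => by simp [relabel, subs]
  | .node l r => by
      show subs (RTree.node (l.relabel f) (r.relabel f)) = _
      rw [subs_node, subs_node, Finset.image_insert, Finset.image_union,
        subs_relabel l, subs_relabel r,
        show leafSet (RTree.node (l.relabel f) (r.relabel f))
          = (leafSet (RTree.node l r)).image f from ?_]
      rw [leafSet_node, leafSet_node, leafSet_relabel hf, leafSet_relabel hf,
        Finset.image_union]

theorem ins_relabel (a : α) (S : Finset α) : ∀ t : RTree α,
    (ins a S t).relabel f = ins (f a) (S.image f) (t.relabel f)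
  | .leaf b => by
      rw [ins_leaf]
      split_ifs with h
      · rw [show (RTree.leaf b).relabel f = RTree.leaf (f b) from rfl, ins_leaf,
          if_pos (by rw [← h, Finset.image_singleton])]
        rfl
      · rw [show (RTree.leaf b).relabel f = RTree.leaf (f b) from rfl, ins_leaf,
          if_neg (by
            intro he
            apply h
            rw [← Finset.image_singleton f b] at he
            exact Finset.image_injective hf he)]
  | .node l r => by
      rw [ins_node]
      split_ifs with h
      · rw [show (RTree.node l r).relabel f = RTree.node (l.relabel f) (r.relabel f) from rfl,
          ins_node, if_pos (by rw [show leafSet (RTree.node (l.relabel f) (r.relabel f))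
            = (leafSet (RTree.node l r)).image f from by
              rw [leafSet_node, leafSet_node, leafSet_relabel hf, leafSet_relabel hf,
                Finset.image_union], h])]
        rfl
      · rw [show (RTree.node l r).relabel f = RTree.node (l.relabel f) (r.relabel f) from rfl,
          ins_node, if_neg (by
            rw [show leafSet (RTree.node (l.relabel f) (r.relabel f))
              = (leafSet (RTree.node l r)).image f from by
                rw [leafSet_node, leafSet_node, leafSet_relabel hf, leafSet_relabel hf,
                  Finset.image_union]]
            intro he
            exact h (Finset.image_injective hf he)),
          ← ins_relabel a S l, ← ins_relabel a S r]
        rfl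

theorem del_relabel (a : α) : ∀ t : RTree α,
    (del a t).relabel f = del (f a) (t.relabel f)
  | .leaf b => rfl
  | .node l r => by
      rw [del_node,
        show (RTree.node l r).relabel f = RTree.node (l.relabel f) (r.relabel f) from rfl,
        del_node]
      by_cases h1 : l = .leaf a
      · rw [if_pos h1, if_pos (by rw [h1]; rfl)]
      · rw [if_neg h1, if_neg (fun he => h1 ((relabel_eq_leaf_iff hf).1 he))]
        by_cases h2 : r = .leaf a
        · rw [if_pos h2, if_pos (by rw [h2]; rfl)]
        · rw [if_neg h2, if_neg (fun he => h2 ((relabel_eq_leaf_iff hf).1 he))]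
          by_cases h3 : a ∈ l.leaves
          · rw [if_pos h3, if_pos ((mem_leaves_relabel hf).2 h3)]
            rw [show (RTree.node (del a l) r).relabel f
              = RTree.node ((del a l).relabel f) (r.relabel f) from rfl, del_relabel a l]
          · rw [if_neg h3, if_neg (fun hm => h3 ((mem_leaves_relabel hf).1 hm))]
            rw [show (RTree.node l (del a r)).relabel f
              = RTree.node (l.relabel f) ((del a r).relabel f) from rfl, del_relabel a r]

theorem sib_relabel (a : α) : ∀ t : RTree α,
    sib (f a) (t.relabel f) = (sib a t).image f
  | .leaf b => by simp [relabel, sib]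
  | .node l r => by
      rw [sib_node,
        show (RTree.node l r).relabel f = RTree.node (l.relabel f) (r.relabel f) from rfl,
        sib_node]
      by_cases h1 : l = .leaf a
      · rw [if_pos (by rw [h1]; rfl), if_pos h1, leafSet_relabel hf]
      · rw [if_neg (fun he => h1 ((relabel_eq_leaf_iff hf).1 he)), if_neg h1]
        by_cases h2 : r = .leaf a
        · rw [if_pos (by rw [h2]; rfl), if_pos h2, leafSet_relabel hf]
        · rw [if_neg (fun he => h2 ((relabel_eq_leaf_iff hf).1 he)), if_neg h2]
          by_cases h3 : a ∈ l.leaves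
          · rw [if_pos ((mem_leaves_relabel hf).2 h3), if_pos h3, sib_relabel a l]
          · rw [if_neg (fun hm => h3 ((mem_leaves_relabel hf).1 hm)), if_neg h3,
              sib_relabel a r]

end Relabel


theorem TEquiv.ins_congr {a : α} {S : Finset α} {t t' : RTree α} (h : TEquiv t t') :
    TEquiv (ins a S t) (ins a S t') := by
  induction h with
  | leaf b => exact .refl _
  | @node l r l' r' h1 h2 ih1 ih2 =>
      rw [ins_node, ins_node]
      by_cases hc : leafSet (RTree.node l r) = S
      · rw [if_pos hc, if_pos (by rw [← (TEquiv.node h1 h2).leafSet_eq]; exact hc)]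
        exact .node (.node h1 h2) (.refl _)
      · rw [if_neg hc, if_neg (by rw [← (TEquiv.node h1 h2).leafSet_eq]; exact hc)]
        exact .node ih1 ih2
  | @swap l r l' r' h1 h2 ih1 ih2 =>
      rw [ins_node, ins_node]
      by_cases hc : leafSet (RTree.node l r) = S
      · rw [if_pos hc, if_pos (by rw [← (TEquiv.swap h1 h2).leafSet_eq]; exact hc)]
        exact .node (.swap h1 h2) (.refl _)
      · rw [if_neg hc, if_neg (by rw [← (TEquiv.swap h1 h2).leafSet_eq]; exact hc)]
        exact .swap ih1 ih2

theorem not_mem_sib {a : α} : ∀ {t : RTree α}, t.leaves.Nodup → a ∉ sib a t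
  | .leaf b, _ => by simp [sib]
  | .node l r, hn => by
      obtain ⟨hnl, hnr, hdlr⟩ := nodup_node hn
      rw [sib_node]
      split_ifs with h1 h2 h3
      · intro hm
        have hal : a ∈ l.leaves := by rw [h1]; simp [leaves]
        exact Multiset.disjoint_left.1 hdlr hal (mem_leafSet.1 hm)
      · intro hm
        have har : a ∈ r.leaves := by rw [h2]; simp [leaves]
        exact Multiset.disjoint_left.1 hdlr (mem_leafSet.1 hm) har
      · exact not_mem_sib hnl
      · exact not_mem_sib hnr

theorem ne_leaf_of_two_le {t : RTree α} {b : α} (h : 2 ≤ Multiset.card t.leaves) :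
    t ≠ .leaf b := by
  intro he
  rw [he] at h
  simp [leaves] at h

end DecEq

theorem TEquiv.symm {t u : RTree α} (h : TEquiv t u) : TEquiv u t := by
  induction h with
  | leaf a => exact .leaf a
  | node h1 h2 ih1 ih2 => exact .node ih1 ih2
  | swap h1 h2 ih1 ih2 => exact .swap ih2 ih1

theorem TEquiv.trans : ∀ {t u v : RTree α}, TEquiv t u → TEquiv u v → TEquiv t v := by
  intro t u v h1
  induction h1 generalizing v with
  | leaf a => exact fun h2 => h2
  | @node l r l' r' h1 h2 ih1 ih2 =>
      intro h3
      cases h3 with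
      | node g1 g2 => exact .node (ih1 g1) (ih2 g2)
      | swap g1 g2 => exact .swap (ih1 g1) (ih2 g2)
  | @swap l r l' r' h1 h2 ih1 ih2 =>
      intro h3
      cases h3 with
      | node g1 g2 => exact .swap (ih1 g2) (ih2 g1)
      | swap g1 g2 => exact .node (ih1 g2) (ih2 g1)

theorem tequiv_equivalence : Equivalence (@TEquiv α) :=
  ⟨TEquiv.refl, TEquiv.symm, TEquiv.trans⟩

end RTree

namespace PTree

theorem mk_eq_mk {t t' : RTree α} :
    (Quot.mk RTree.TEquiv t : PTree α) = Quot.mk RTree.TEquiv t' ↔ RTree.TEquiv t t' := by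
  rw [Quot.eq]
  exact Equivalence.eqvGen_iff RTree.tequiv_equivalence

theorem exists_rep (x : PTree α) : ∃ t : RTree α, Quot.mk RTree.TEquiv t = x :=
  Quot.exists_rep x

@[simp] theorem leaves_mk (t : RTree α) :
    PTree.leaves (Quot.mk RTree.TEquiv t) = t.leaves := rfl

@[simp] theorem relabel_mk (f : α → α) (t : RTree α) :
    PTree.relabel f (Quot.mk RTree.TEquiv t) = Quot.mk RTree.TEquiv (t.relabel f) := rfl

section DecEqP
variable [DecidableEq α]

def insP (a : α) (S : Finset α) : PTree α → PTree α :=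
  Quot.lift (fun t => Quot.mk RTree.TEquiv (RTree.ins a S t))
    (fun _ _ h => Quot.sound h.ins_congr)

@[simp] theorem insP_mk (a : α) (S : Finset α) (t : RTree α) :
    insP a S (Quot.mk RTree.TEquiv t) = Quot.mk RTree.TEquiv (RTree.ins a S t) := rfl

def delP (a : α) : PTree α → PTree α :=
  Quot.lift
    (fun t => if t.leaves.count a ≤ 1 then Quot.mk RTree.TEquiv (RTree.del a t)
      else Quot.mk RTree.TEquiv t) (by
    intro t t' h
    have hl := h.leaves_eq
    show (if t.leaves.count a ≤ 1 then Quot.mk RTree.TEquiv (RTree.del a t)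
        else Quot.mk RTree.TEquiv t : Quot RTree.TEquiv) =
      (if t'.leaves.count a ≤ 1 then Quot.mk RTree.TEquiv (RTree.del a t')
        else Quot.mk RTree.TEquiv t' : Quot RTree.TEquiv)
    by_cases hc : t.leaves.count a ≤ 1
    · rw [if_pos hc, if_pos (by rw [← hl]; exact hc)]
      exact Quot.sound (h.del_congr hc)
    · rw [if_neg hc, if_neg (by rw [← hl]; exact hc)]
      exact Quot.sound h)

theorem delP_mk {a : α} {t : RTree α} (hc : t.leaves.count a ≤ 1) :
    delP a (Quot.mk RTree.TEquiv t) = Quot.mk RTree.TEquiv (RTree.del a t) := by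
  show ite _ _ _ = _
  exact if_pos hc

def sibP (a : α) : PTree α → Finset α :=
  Quot.lift (fun t => if t.leaves.count a ≤ 1 then RTree.sib a t else ∅) (by
    intro t t' h
    have hl := h.leaves_eq
    show (if t.leaves.count a ≤ 1 then RTree.sib a t else ∅) =
      (if t'.leaves.count a ≤ 1 then RTree.sib a t' else ∅)
    by_cases hc : t.leaves.count a ≤ 1
    · rw [if_pos hc, if_pos (by rw [← hl]; exact hc)]
      exact h.sib_congr hc
    · rw [if_neg hc, if_neg (by rw [← hl]; exact hc)])

theorem sibP_mk {a : α} {t : RTree α} (hc : t.leaves.count a ≤ 1) :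
    sibP a (Quot.mk RTree.TEquiv t) = RTree.sib a t := by
  show ite _ _ _ = _
  rw [if_pos hc]

def subsP : PTree α → Finset (Finset α) :=
  Quot.lift RTree.subs (fun _ _ h => h.subs_eq)

@[simp] theorem subsP_mk (t : RTree α) :
    subsP (Quot.mk RTree.TEquiv t : PTree α) = RTree.subs t := rfl

end DecEqP
end PTree









/-- the k = 1 case of the Rémy-type isomorphism. If the largest cycle
of σ is a transposition (a₁ a₂) with a₁ < a₂, and A' = A ∖ {a₁, a₂} (nonempty, carrying
the other cycles of σ, whose restriction to A' is σ'), then σ-fixed phylogenetic trees on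
A are in bijection with pairs (γ', e) of a σ'-fixed tree on A' and one of its
2|A'| − 1 edges; the inverse inserts a cherry {a₁,a₂} at e when the σ'-edge-cycle of e
has size 1, and single leaves a₁ at e, a₂ at σ'(e) when it has size 2. -/
theorem stmt17 {α : Type} [Fintype α] [DecidableEq α] [LinearOrder α]
    (σ : Equiv.Perm α) (a₁ a₂ : α) (h12 : a₁ < a₂)
    (hswap : σ a₁ = a₂ ∧ σ a₂ = a₁)
    (hmax : ∀ b, (orbitF σ b).card ≤ 2)
    (A' : Finset α) (hA' : A' = ({a₁, a₂} : Finset α)ᶜ) (hA'ne : A'.Nonempty) :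
    Nonempty (↥(fixedTrees σ Finset.univ) ≃
      ↥(fixedTrees σ A') × Fin (2 * A'.card - 1)) := by
  classical
  obtain ⟨hs1, hs2⟩ := hswap
  have ha12 : a₁ ≠ a₂ := ne_of_lt h12
  have ha21 : a₂ ≠ a₁ := ha12.symm
  -- σ is an involution
  have hinv : ∀ x, σ (σ x) = x := by
    intro x
    by_cases hfix : σ x = x
    · rw [hfix, hfix]
    · have hx : x ∈ orbitF σ x := by
        simp only [orbitF, Finset.mem_filter, Finset.mem_univ, true_and]
        exact ⟨0, by simp⟩
      have hsx : σ x ∈ orbitF σ x := by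
        simp only [orbitF, Finset.mem_filter, Finset.mem_univ, true_and]
        exact ⟨1, by simp⟩
      have hsub : ({x, σ x} : Finset α) ⊆ orbitF σ x := by
        intro y hy
        simp only [Finset.mem_insert, Finset.mem_singleton] at hy
        rcases hy with rfl | rfl
        · exact hx
        · exact hsx
      have hcard : ({x, σ x} : Finset α).card = 2 := by
        rw [Finset.card_insert_of_notMem (by
          simp only [Finset.mem_singleton]
          exact fun h => hfix h.symm), Finset.card_singleton]
      have heq : orbitF σ x = {x, σ x} :=
        (Finset.eq_of_subset_of_card_le hsub (by rw [hcard]; exact hmax x)).symm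
      have hm2 : σ (σ x) ∈ orbitF σ x := by
        simp only [orbitF, Finset.mem_filter, Finset.mem_univ, true_and]
        exact ⟨2, by
          rw [show (2 : ℤ) = 1 + 1 from rfl, zpow_add, zpow_one, Equiv.Perm.mul_apply]⟩
      rw [heq] at hm2
      simp only [Finset.mem_insert, Finset.mem_singleton] at hm2
      rcases hm2 with h | h
      · exact h
      · exact absurd (σ.injective h) hfix
  -- A' facts
  have hmemA' : ∀ x : α, x ∈ A' ↔ (x ≠ a₁ ∧ x ≠ a₂) := by
    intro x
    rw [hA']
    simp [not_or]
  have ha1A : a₁ ∉ A' := by rw [hmemA']; tauto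
  have ha2A : a₂ ∉ A' := by rw [hmemA']; tauto
  have ha1Av : a₁ ∉ A'.val := ha1A
  have ha2Av : a₂ ∉ A'.val := ha2A
  have hvalA : (Finset.univ : Finset α).val = a₂ ::ₘ a₁ ::ₘ A'.val := by
    have h1 : A' = (Finset.univ.erase a₂).erase a₁ := by
      ext x
      rw [hmemA']
      simp only [Finset.mem_erase, Finset.mem_univ, and_true]
    have ha1e : a₁ ∈ (Finset.univ : Finset α).val.erase a₂ := by
      rw [← Finset.erase_val]
      exact Finset.mem_def.1 (Finset.mem_erase.2 ⟨ha12, Finset.mem_univ _⟩)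
    rw [h1, Finset.erase_val, Finset.erase_val, Multiset.cons_erase ha1e,
      Multiset.cons_erase (Finset.mem_def.1 (Finset.mem_univ a₂))]
  have hnuniv : (Finset.univ : Finset α).val.Nodup := Finset.univ.nodup
  have hnA' : A'.val.Nodup := A'.nodup
  have hA1 : 1 ≤ A'.card := Finset.card_pos.2 hA'ne
  have hcardAv : Multiset.card A'.val = A'.card := rfl
  have hcardU : Multiset.card (Finset.univ : Finset α).val = A'.card + 2 := by
    rw [hvalA, Multiset.card_cons, Multiset.card_cons, hcardAv]
  have hσσ : ∀ S : Finset α, (S.image σ).image σ = S := by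
    intro S
    rw [Finset.image_image]
    ext x
    simp only [Finset.mem_image, Function.comp_apply]
    constructor
    · rintro ⟨y, hy, rfl⟩
      rw [hinv]; exact hy
    · intro hx
      exact ⟨x, hx, hinv x⟩
  have hcardIm : ∀ S : Finset α, (S.image σ).card = S.card :=
    fun S => Finset.card_image_of_injective S σ.injective
  -- the raw maps
  set Gfun : PTree α → PTree α := fun t => PTree.delP a₁ (PTree.delP a₂ t) with hGfun
  set Sfun : PTree α → Finset α := fun t => PTree.sibP a₁ (PTree.delP a₂ t) with hSfun
  set Bfun : PTree α → Finset α → PTree α := fun γ S =>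
    PTree.insP a₂ (if S.image σ = S then {a₁} else S.image σ) (PTree.insP a₁ S γ)
    with hBfun
  -- forward core
  have hFwd : ∀ t : RTree α, t.leaves = (Finset.univ : Finset α).val →
      PTree.relabel σ (Quot.mk RTree.TEquiv t) = Quot.mk RTree.TEquiv t →
      Gfun (Quot.mk RTree.TEquiv t) ∈ fixedTrees σ A' ∧
      Sfun (Quot.mk RTree.TEquiv t) ∈ PTree.subsP (Gfun (Quot.mk RTree.TEquiv t)) ∧
      Bfun (Gfun (Quot.mk RTree.TEquiv t)) (Sfun (Quot.mk RTree.TEquiv t)) =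
        Quot.mk RTree.TEquiv t := by
    intro t hlv hfx
    have hn : t.leaves.Nodup := by rw [hlv]; exact hnuniv
    have hcard : Multiset.card t.leaves = A'.card + 2 := by rw [hlv]; exact hcardU
    have hc2 : 2 ≤ Multiset.card t.leaves := by omega
    have hc3 : 3 ≤ Multiset.card t.leaves := by omega
    have ha1t : a₁ ∈ t.leaves := by rw [hlv]; exact Finset.mem_def.1 (Finset.mem_univ _)
    have ha2t : a₂ ∈ t.leaves := by rw [hlv]; exact Finset.mem_def.1 (Finset.mem_univ _)
    have hte : RTree.TEquiv (t.relabel σ) t := PTree.mk_eq_mk.1 hfx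
    have hnrel : (t.relabel σ).leaves.Nodup := by
      rw [RTree.leaves_relabel]
      exact hn.map σ.injective
    have hulv : (RTree.del a₂ t).leaves = a₁ ::ₘ A'.val := by
      rw [RTree.leaves_del_nodup hn (RTree.ne_leaf_of_two_le hc2), hlv, hvalA,
        Multiset.erase_cons_head]
    have hnu : (RTree.del a₂ t).leaves.Nodup := RTree.nodup_del hn
    have hcu2 : 2 ≤ Multiset.card (RTree.del a₂ t).leaves := by
      rw [hulv, Multiset.card_cons, hcardAv]; omega
    have ha1u : a₁ ∈ (RTree.del a₂ t).leaves := by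
      rw [hulv]; exact Multiset.mem_cons_self _ _
    have hglv : (RTree.del a₁ (RTree.del a₂ t)).leaves = A'.val := by
      rw [RTree.leaves_del_nodup hnu (RTree.ne_leaf_of_two_le hcu2), hulv,
        Multiset.erase_cons_head]
    have hGmk : Gfun (Quot.mk RTree.TEquiv t)
        = Quot.mk RTree.TEquiv (RTree.del a₁ (RTree.del a₂ t)) := by
      rw [hGfun]
      dsimp only
      rw [PTree.delP_mk (RTree.count_le_one_of_nodup hn a₂),
        PTree.delP_mk (RTree.count_le_one_of_nodup hnu a₁)]
    have hSmk : Sfun (Quot.mk RTree.TEquiv t) = RTree.sib a₁ (RTree.del a₂ t) := by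
      rw [hSfun]
      dsimp only
      rw [PTree.delP_mk (RTree.count_le_one_of_nodup hn a₂),
        PTree.sibP_mk (RTree.count_le_one_of_nodup hnu a₁)]
    have hgfix : PTree.relabel σ (Quot.mk RTree.TEquiv (RTree.del a₁ (RTree.del a₂ t)))
        = Quot.mk RTree.TEquiv (RTree.del a₁ (RTree.del a₂ t)) := by
      rw [PTree.relabel_mk]
      have e1 : (RTree.del a₁ (RTree.del a₂ t)).relabel σ
          = RTree.del a₂ (RTree.del a₁ (t.relabel σ)) := by
        rw [RTree.del_relabel σ.injective a₁, RTree.del_relabel σ.injective a₂, hs1, hs2]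
      have e2 : RTree.TEquiv (RTree.del a₂ (RTree.del a₁ (t.relabel σ)))
          (RTree.del a₂ (RTree.del a₁ t)) :=
        (hte.del_congr (RTree.count_le_one_of_nodup hnrel a₁)).del_congr
          (RTree.count_le_one_of_nodup (RTree.nodup_del hnrel) a₂)
      rw [e1, Quot.sound e2, RTree.del_comm ha21 hn hc3]
    have hfixg : Quot.mk RTree.TEquiv (RTree.del a₁ (RTree.del a₂ t)) ∈ fixedTrees σ A' :=
      ⟨hglv, hgfix⟩
    have hSsubs : RTree.sib a₁ (RTree.del a₂ t)
        ∈ RTree.subs (RTree.del a₁ (RTree.del a₂ t)) :=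
      RTree.sib_mem_subs_del hnu ha1u hcu2
    refine ⟨by rw [hGmk]; exact hfixg, by rw [hGmk, hSmk]; exact hSsubs, ?_⟩
    rw [hGmk, hSmk, hBfun]
    dsimp only
    have hstepA : PTree.insP a₁ (RTree.sib a₁ (RTree.del a₂ t))
        (Quot.mk RTree.TEquiv (RTree.del a₁ (RTree.del a₂ t)))
        = Quot.mk RTree.TEquiv (RTree.del a₂ t) := by
      rw [PTree.insP_mk]
      exact Quot.sound (RTree.teq_ins_sib_del hnu ha1u hcu2)
    rw [hstepA]
    have hBC : RTree.sib a₂ t = (RTree.sib a₁ t).image σ := by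
      have h1 := RTree.sib_relabel σ.injective a₁ t
      rw [hs1] at h1
      rw [← h1]
      exact (hte.sib_congr (RTree.count_le_one_of_nodup hnrel a₂)).symm
    have hS2 : (RTree.sib a₁ (RTree.del a₂ t)).image σ
        = RTree.sib a₂ (RTree.del a₁ t) := by
      have h1 := RTree.sib_relabel σ.injective a₁ (RTree.del a₂ t)
      rw [hs1] at h1
      have h2 : (RTree.del a₂ t).relabel σ = RTree.del a₁ (t.relabel σ) := by
        rw [RTree.del_relabel σ.injective a₂, hs2]
      rw [h2] at h1
      rw [← h1]
      exact (hte.del_congr (RTree.count_le_one_of_nodup hnrel a₁)).sib_congr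
        (RTree.count_le_one_of_nodup (RTree.nodup_del hnrel) a₂)
    have hT : (if (RTree.sib a₁ (RTree.del a₂ t)).image σ = RTree.sib a₁ (RTree.del a₂ t)
        then ({a₁} : Finset α) else (RTree.sib a₁ (RTree.del a₂ t)).image σ)
        = RTree.sib a₂ t := by
      by_cases hC : RTree.sib a₁ t = {a₂}
      · have hSS : (RTree.sib a₁ (RTree.del a₂ t)).image σ
            = RTree.sib a₁ (RTree.del a₂ t) := by
          rw [hS2, ← RTree.sib_cherry hn ha1t ha12 hC]
        rw [if_pos hSS, hBC, hC, Finset.image_singleton, hs2]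
      · have ha2C : a₂ ∉ RTree.sib a₁ t := by
          intro hmem
          have ha1B : a₁ ∈ RTree.sib a₂ t := by
            rw [hBC]
            exact Finset.mem_image.2 ⟨a₂, hmem, hs2⟩
          have hP1 := RTree.par_eq_insert_sib ha1t hc2
          have hP2 := RTree.par_eq_insert_sib ha2t hc2
          have hP1s := RTree.par_mem_subs ha1t hc2
          have hP2s := RTree.par_mem_subs ha2t hc2
          have himg : (RTree.par a₁ t).image σ = RTree.par a₂ t := by
            rw [hP1, hP2, Finset.image_insert, hs1, hBC]
          have ha1P1 : a₁ ∈ RTree.par a₁ t := RTree.mem_par ha1t hc2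
          have ha1P2 : a₁ ∈ RTree.par a₂ t := by
            rw [hP2]
            exact Finset.mem_insert_of_mem ha1B
          have hPP : RTree.par a₁ t = RTree.par a₂ t := by
            rcases RTree.subs_nested hn hP1s hP2s with h | h | h
            · refine Finset.eq_of_subset_of_card_le h ?_
              rw [← himg, Finset.card_image_of_injective _ σ.injective]
            · exact (Finset.eq_of_subset_of_card_le h (by
                rw [← himg, Finset.card_image_of_injective _ σ.injective])).symm
            · exact absurd ha1P2 (Finset.disjoint_left.1 h ha1P1)
          exact hC (RTree.par_eq_par hn ha1t ha2t ha12 hPP)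
        have ha1B : a₁ ∉ RTree.sib a₂ t := by
          rw [hBC]
          intro hmem
          obtain ⟨c, hc, hcc⟩ := Finset.mem_image.1 hmem
          have hca : c = a₂ := by
            have h := congrArg σ hcc
            rw [hinv, hs1] at h
            exact h
          exact ha2C (hca ▸ hc)
        have hSC : RTree.sib a₁ (RTree.del a₂ t) = RTree.sib a₁ t :=
          RTree.sib_del hn ha1t ha12 ha2C
        have hS2B : (RTree.sib a₁ (RTree.del a₂ t)).image σ = RTree.sib a₂ t := by
          rw [hS2]
          exact RTree.sib_del hn ha2t ha21 ha1B
        have hBneC : RTree.sib a₂ t ≠ RTree.sib a₁ t := by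
          intro hD
          have hDne : (RTree.sib a₁ t).Nonempty := RTree.sib_nonempty ha1t hc2
          have hP1 := RTree.par_eq_insert_sib ha1t hc2
          have hP2 := RTree.par_eq_insert_sib ha2t hc2
          have hP1s := RTree.par_mem_subs ha1t hc2
          have hP2s := RTree.par_mem_subs ha2t hc2
          have ha1D : a₁ ∉ RTree.sib a₁ t := RTree.not_mem_sib hn
          rcases RTree.subs_nested hn hP1s hP2s with h | h | h
          · have hmm : a₁ ∈ RTree.par a₂ t := h (RTree.mem_par ha1t hc2)
            rw [hP2, hD] at hmm
            simp only [Finset.mem_insert] at hmm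
            rcases hmm with h' | h'
            · exact ha12 h'
            · exact ha1D h'
          · have hmm : a₂ ∈ RTree.par a₁ t := h (RTree.mem_par ha2t hc2)
            rw [hP1] at hmm
            simp only [Finset.mem_insert] at hmm
            rcases hmm with h' | h'
            · exact ha21 h'
            · exact ha2C h'
          · obtain ⟨d, hd⟩ := hDne
            have hd1 : d ∈ RTree.par a₁ t := by
              rw [hP1]; exact Finset.mem_insert_of_mem hd
            have hd2 : d ∈ RTree.par a₂ t := by
              rw [hP2, hD]; exact Finset.mem_insert_of_mem hd
            exact Finset.disjoint_left.1 h hd1 hd2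
        rw [if_neg (by rw [hS2B, hSC]; exact hBneC), hS2B]
    rw [hT, PTree.insP_mk]
    exact Quot.sound (RTree.teq_ins_sib_del hn ha2t hc2)
  -- backward core
  have hBwd : ∀ g : RTree α, g.leaves = A'.val →
      PTree.relabel σ (Quot.mk RTree.TEquiv g) = Quot.mk RTree.TEquiv g →
      ∀ S : Finset α, S ∈ RTree.subs g →
      Bfun (Quot.mk RTree.TEquiv g) S ∈ fixedTrees σ Finset.univ ∧
      Gfun (Bfun (Quot.mk RTree.TEquiv g) S) = Quot.mk RTree.TEquiv g ∧
      Sfun (Bfun (Quot.mk RTree.TEquiv g) S) = S := by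
    intro g hglv hgfx S hS
    have hng : g.leaves.Nodup := by rw [hglv]; exact hnA'
    have ha1g : a₁ ∉ g.leaves := by rw [hglv]; exact ha1Av
    have ha2g : a₂ ∉ g.leaves := by rw [hglv]; exact ha2Av
    have hte : RTree.TEquiv (g.relabel σ) g := PTree.mk_eq_mk.1 hgfx
    have hSsubA : ∀ x ∈ S, x ∈ A'.val := by
      intro x hx
      have hxx := RTree.mem_leafSet.1 (RTree.subset_of_mem_subs hS hx)
      rw [hglv] at hxx
      exact hxx
    have hSne : S.Nonempty := RTree.nonempty_of_mem_subs hS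
    have ha1S : a₁ ∉ S := fun h => ha1Av (hSsubA _ h)
    have ha2S : a₂ ∉ S := fun h => ha2Av (hSsubA _ h)
    have hsubg : (RTree.subs g).image (Finset.image σ) = RTree.subs g := by
      rw [← RTree.subs_relabel σ.injective g]
      exact hte.subs_eq
    have hσS : S.image σ ∈ RTree.subs g := by
      rw [← hsubg]
      exact Finset.mem_image_of_mem _ hS
    have ha1σS : a₁ ∉ S.image σ := by
      intro h
      obtain ⟨c, hc, hcc⟩ := Finset.mem_image.1 h
      have hca : c = a₂ := by
        have h2 := congrArg σ hcc
        rw [hinv, hs1] at h2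
        exact h2
      exact ha2S (hca ▸ hc)
    have hulv : (RTree.ins a₁ S g).leaves = a₁ ::ₘ A'.val := by
      rw [RTree.leaves_ins hng hS, hglv]
    have hnu : (RTree.ins a₁ S g).leaves.Nodup := by
      rw [hulv]
      exact Multiset.nodup_cons.2 ⟨ha1Av, hnA'⟩
    have ha2u : a₂ ∉ (RTree.ins a₁ S g).leaves := by
      rw [hulv]
      simp only [Multiset.mem_cons, not_or]
      exact ⟨ha21, ha2Av⟩
    have ha1u : a₁ ∈ (RTree.ins a₁ S g).leaves := by
      rw [hulv]; exact Multiset.mem_cons_self _ _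
    have hdisj : S.image σ ≠ S → Disjoint S (S.image σ) := by
      intro hne
      rcases RTree.subs_nested hng hS hσS with h | h | h
      · exact absurd (Finset.eq_of_subset_of_card_le h (le_of_eq (hcardIm S))).symm hne
      · exact absurd (Finset.eq_of_subset_of_card_le h (le_of_eq (hcardIm S).symm)) hne
      · exact h
    have hT_subs : (if S.image σ = S then ({a₁} : Finset α) else S.image σ)
        ∈ RTree.subs (RTree.ins a₁ S g) := by
      split_ifs with hc
      · exact RTree.singleton_mem_subs ha1u
      · refine RTree.mem_subs_ins hσS (Or.inr ?_)
        intro hsub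
        exact hc (Finset.eq_of_subset_of_card_le hsub (le_of_eq (hcardIm S))).symm
    have hwlv : (RTree.ins a₂ (if S.image σ = S then ({a₁} : Finset α) else S.image σ)
        (RTree.ins a₁ S g)).leaves = (Finset.univ : Finset α).val := by
      rw [RTree.leaves_ins hnu hT_subs, hulv, hvalA]
    have hnw : (RTree.ins a₂ (if S.image σ = S then ({a₁} : Finset α) else S.image σ)
        (RTree.ins a₁ S g)).leaves.Nodup := by
      rw [hwlv]; exact hnuniv
    have hBmk : Bfun (Quot.mk RTree.TEquiv g) S
        = Quot.mk RTree.TEquiv (RTree.ins a₂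
            (if S.image σ = S then ({a₁} : Finset α) else S.image σ)
            (RTree.ins a₁ S g)) := by
      rw [hBfun]
      dsimp only
      rw [PTree.insP_mk, PTree.insP_mk]
    have hwfix : PTree.relabel σ (Bfun (Quot.mk RTree.TEquiv g) S)
        = Bfun (Quot.mk RTree.TEquiv g) S := by
      rw [hBmk, PTree.relabel_mk, RTree.ins_relabel σ.injective,
        RTree.ins_relabel σ.injective, hs2, hs1]
      by_cases hc : S.image σ = S
      · rw [if_pos hc, Finset.image_singleton, hs1, hc]
        calc Quot.mk RTree.TEquiv (RTree.ins a₁ {a₂} (RTree.ins a₂ S (g.relabel σ)))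
            = Quot.mk RTree.TEquiv (RTree.ins a₁ {a₂} (RTree.ins a₂ S g)) :=
              Quot.sound (hte.ins_congr.ins_congr)
          _ = _ := Quot.sound (RTree.teq_ins_cherry ha2g ha1g)
      · rw [if_neg hc, hσσ]
        calc Quot.mk RTree.TEquiv (RTree.ins a₁ S (RTree.ins a₂ (S.image σ) (g.relabel σ)))
            = Quot.mk RTree.TEquiv (RTree.ins a₁ S (RTree.ins a₂ (S.image σ) g)) :=
              Quot.sound (hte.ins_congr.ins_congr)
          _ = _ := congrArg _
              (RTree.ins_comm hSne (hSne.image σ) (hdisj hc) ha1σS ha2S g)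
    refine ⟨⟨by rw [hBmk]; exact hwlv, hwfix⟩, ?_, ?_⟩
    · rw [hBmk, hGfun]
      dsimp only
      rw [PTree.delP_mk (RTree.count_le_one_of_nodup hnw a₂), RTree.del_ins hnu ha2u,
        PTree.delP_mk (RTree.count_le_one_of_nodup hnu a₁), RTree.del_ins hng ha1g]
    · rw [hBmk, hSfun]
      dsimp only
      rw [PTree.delP_mk (RTree.count_le_one_of_nodup hnw a₂), RTree.del_ins hnu ha2u,
        PTree.sibP_mk (RTree.count_le_one_of_nodup hnu a₁), RTree.sib_ins hng ha1g hS]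
  -- assembly
  refine ⟨?_⟩
  have e1 : {t : PTree α // t ∈ fixedTrees σ Finset.univ} ≃
      {p : {γ : PTree α // γ ∈ fixedTrees σ A'} × Finset α //
        p.2 ∈ PTree.subsP p.1.1} := by
    refine ⟨fun t => ⟨(⟨Gfun t.1, ?_⟩, Sfun t.1), ?_⟩,
      fun p => ⟨Bfun p.1.1.1 p.1.2, ?_⟩, ?_, ?_⟩
    · obtain ⟨x, hx⟩ := t
      obtain ⟨t0, ht0⟩ := PTree.exists_rep x
      subst ht0
      exact (hFwd t0 hx.1 hx.2).1
    · obtain ⟨x, hx⟩ := t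
      obtain ⟨t0, ht0⟩ := PTree.exists_rep x
      subst ht0
      exact (hFwd t0 hx.1 hx.2).2.1
    · obtain ⟨⟨⟨γ, hγ⟩, S⟩, hSm⟩ := p
      obtain ⟨g0, hg0⟩ := PTree.exists_rep γ
      subst hg0
      exact (hBwd g0 hγ.1 hγ.2 S hSm).1
    · intro t
      obtain ⟨x, hx⟩ := t
      obtain ⟨t0, ht0⟩ := PTree.exists_rep x
      subst ht0
      exact Subtype.ext (hFwd t0 hx.1 hx.2).2.2
    · intro p
      obtain ⟨⟨⟨γ, hγ⟩, S⟩, hSm⟩ := p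
      obtain ⟨g0, hg0⟩ := PTree.exists_rep γ
      subst hg0
      have h := hBwd g0 hγ.1 hγ.2 S hSm
      apply Subtype.ext
      dsimp only
      exact Prod.ext (Subtype.ext h.2.1) h.2.2
  have hcardSubs : ∀ γ : {γ : PTree α // γ ∈ fixedTrees σ A'},
      (PTree.subsP γ.1).card = 2 * A'.card - 1 := by
    intro γ
    obtain ⟨x, hx⟩ := γ
    obtain ⟨g0, hg0⟩ := PTree.exists_rep x
    subst hg0
    show (RTree.subs g0).card = _
    have hlvg : g0.leaves = A'.val := hx.1
    rw [RTree.subs_card (by rw [hlvg]; exact hnA'), hlvg, hcardAv]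
  have e2 : {p : {γ : PTree α // γ ∈ fixedTrees σ A'} × Finset α //
        p.2 ∈ PTree.subsP p.1.1} ≃
      Σ γ : {γ : PTree α // γ ∈ fixedTrees σ A'},
        {S : Finset α // S ∈ PTree.subsP γ.1} :=
    Equiv.subtypeProdEquivSigmaSubtype
      (fun (γ : {γ : PTree α // γ ∈ fixedTrees σ A'}) (S : Finset α) =>
        S ∈ PTree.subsP γ.1)
  have e3 : (Σ γ : {γ : PTree α // γ ∈ fixedTrees σ A'},
        {S : Finset α // S ∈ PTree.subsP γ.1}) ≃
      {γ : PTree α // γ ∈ fixedTrees σ A'} × Fin (2 * A'.card - 1) := by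
    refine Equiv.trans (Equiv.sigmaCongrRight fun γ => ?_)
      (Equiv.sigmaEquivProd _ _)
    exact Equiv.trans (PTree.subsP γ.1).equivFin (finCongr (hcardSubs γ))
  exact e1.trans (e2.trans e3)
end

section
/- The number of binary partitions p(n) of n satisfies log p(n) = Θ((log n)²); in particular, for all sufficiently large n, p(n) ≥ n^{c log n} for some constant c > 0. -/
/-- The number of binary partitions of n (partitions all of whose parts are powers
of 2). -/
noncomputable def pBin (n : ℕ) : ℕ :=
  {lam : Nat.Partition n | ∀ p ∈ lam.parts, ∃ k : ℕ, p = 2 ^ k}.ncard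

namespace Stmt19

/-- Multiset of parts: `f i` copies of `2^(i+1)`. -/
def mkParts (m : ℕ) (f : Fin m → Fin (2 ^ m)) : Multiset ℕ :=
  ∑ i : Fin m, Multiset.replicate (f i : ℕ) (2 ^ ((i : ℕ) + 1))

lemma mkParts_sum (m : ℕ) (f : Fin m → Fin (2 ^ m)) :
    (mkParts m f).sum = ∑ i : Fin m, (f i : ℕ) * 2 ^ ((i : ℕ) + 1) := by
  unfold mkParts
  induction (Finset.univ : Finset (Fin m)) using Finset.induction with
  | empty => simp
  | insert a s h ih => simp [Finset.sum_insert h, Multiset.sum_replicate, ih, mul_comm]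

lemma sum_two_pow_succ (m : ℕ) : ∑ i ∈ Finset.range m, 2 ^ (i + 1) ≤ 2 ^ (m + 1) := by
  induction m with
  | zero => simp
  | succ m ih =>
    rw [Finset.sum_range_succ]
    have : 2 ^ (m + 1 + 1) = 2 ^ (m + 1) + 2 ^ (m + 1) := by ring
    omega

lemma mkParts_sum_le (m : ℕ) (f : Fin m → Fin (2 ^ m)) :
    (mkParts m f).sum ≤ 2 ^ (2 * m + 1) := by
  rw [mkParts_sum]
  calc ∑ i : Fin m, (f i : ℕ) * 2 ^ ((i : ℕ) + 1)
      ≤ ∑ i : Fin m, 2 ^ m * 2 ^ ((i : ℕ) + 1) := by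
        refine Finset.sum_le_sum fun i _ => Nat.mul_le_mul_right _ ?_
        exact le_of_lt (f i).isLt
    _ = 2 ^ m * ∑ i ∈ Finset.range m, 2 ^ (i + 1) := by
        rw [← Finset.mul_sum]
        congr 1
        exact Fin.sum_univ_eq_sum_range (fun i => 2 ^ (i + 1)) m
    _ ≤ 2 ^ m * 2 ^ (m + 1) := Nat.mul_le_mul_left _ (sum_two_pow_succ m)
    _ = 2 ^ (2 * m + 1) := by rw [← pow_add]; ring_nf

lemma count_mkParts (m : ℕ) (f : Fin m → Fin (2 ^ m)) (j : Fin m) :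
    (mkParts m f).count (2 ^ ((j : ℕ) + 1)) = f j := by
  unfold mkParts
  rw [Multiset.count_sum']
  rw [Finset.sum_eq_single j]
  · simp [Multiset.count_replicate]
  · intro i _ hij
    rw [Multiset.count_replicate, if_neg]
    intro h
    exact hij (Fin.ext (by
      have := Nat.pow_right_injective (le_refl 2) h
      omega))
  · simp

/-- The binary partition of `n` built from `f`. -/
def mkPartition (n m : ℕ) (h : 2 ^ (2 * m + 1) ≤ n) (f : Fin m → Fin (2 ^ m)) :
    Nat.Partition n where
  parts := Multiset.replicate (n - (mkParts m f).sum) 1 + mkParts m f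
  parts_pos := by
    intro i hi
    rcases Multiset.mem_add.1 hi with hi | hi
    · rw [Multiset.eq_of_mem_replicate hi]; norm_num
    · unfold mkParts at hi
      rcases Multiset.mem_sum.1 hi with ⟨j, _, hj⟩
      rw [Multiset.eq_of_mem_replicate hj]
      positivity
  parts_sum := by
    have hS : (mkParts m f).sum ≤ n := le_trans (mkParts_sum_le m f) h
    rw [Multiset.sum_add, Multiset.sum_replicate, smul_eq_mul, mul_one]
    omega

lemma mkPartition_mem (n m : ℕ) (h : 2 ^ (2 * m + 1) ≤ n) (f : Fin m → Fin (2 ^ m)) :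
    ∀ p ∈ (mkPartition n m h f).parts, ∃ k : ℕ, p = 2 ^ k := by
  intro p hp
  rcases Multiset.mem_add.1 hp with hp | hp
  · exact ⟨0, by rw [Multiset.eq_of_mem_replicate hp]; norm_num⟩
  · rcases Multiset.mem_sum.1 hp with ⟨j, _, hj⟩
    exact ⟨(j : ℕ) + 1, Multiset.eq_of_mem_replicate hj⟩

lemma count_mkPartition (n m : ℕ) (h : 2 ^ (2 * m + 1) ≤ n) (f : Fin m → Fin (2 ^ m))
    (j : Fin m) : (mkPartition n m h f).parts.count (2 ^ ((j : ℕ) + 1)) = f j := by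
  show (Multiset.replicate (n - (mkParts m f).sum) 1 + mkParts m f).count _ = _
  rw [Multiset.count_add, Multiset.count_replicate, if_neg, count_mkParts, zero_add]
  intro hc
  have h2 : (2:ℕ) ≤ 2 ^ ((j:ℕ)+1) := by
    calc (2:ℕ) = 2^1 := rfl
    _ ≤ 2 ^ ((j:ℕ)+1) := Nat.pow_le_pow_right (by norm_num) (by omega)
  omega

lemma mkPartition_injective (n m : ℕ) (h : 2 ^ (2 * m + 1) ≤ n) :
    Function.Injective (mkPartition n m h) := by
  intro f g hfg
  funext j
  have hc := count_mkPartition n m h f j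
  rw [hfg, count_mkPartition] at hc
  exact (Fin.ext hc.symm)

lemma pBin_lower (n m : ℕ) (h : 2 ^ (2 * m + 1) ≤ n) : 2 ^ (m * m) ≤ pBin n := by
  classical
  have key : (Set.univ : Set (Fin m → Fin (2 ^ m))).ncard ≤
      {lam : Nat.Partition n | ∀ p ∈ lam.parts, ∃ k : ℕ, p = 2 ^ k}.ncard := by
    apply Set.ncard_le_ncard_of_injOn (mkPartition n m h)
    · intro f _
      exact mkPartition_mem n m h f
    · exact fun a _ b _ hab => mkPartition_injective n m h hab
  rw [Set.ncard_univ, Nat.card_eq_fintype_card] at key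
  calc 2 ^ (m * m) = Fintype.card (Fin m → Fin (2 ^ m)) := by
        simp [pow_mul]
    _ ≤ pBin n := key

lemma count_le (n : ℕ) (lam : Nat.Partition n) (a : ℕ) : lam.parts.count a ≤ n := by
  calc lam.parts.count a ≤ Multiset.card lam.parts := Multiset.count_le_card a _
    _ = Multiset.card lam.parts • 1 := by simp
    _ ≤ lam.parts.sum := Multiset.card_nsmul_le_sum fun x hx => lam.parts_pos hx
    _ = n := lam.parts_sum

lemma pBin_upper (n : ℕ) : pBin n ≤ (n + 1) ^ (Nat.log 2 n + 1) := by
  classical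
  set L := Nat.log 2 n with hL
  have key : {lam : Nat.Partition n | ∀ p ∈ lam.parts, ∃ k : ℕ, p = 2 ^ k}.ncard ≤
      (Set.univ : Set (Fin (L + 1) → Fin (n + 1))).ncard := by
    apply Set.ncard_le_ncard_of_injOn
      (fun lam i => (⟨lam.parts.count (2 ^ (i : ℕ)), by
        have := count_le n lam (2 ^ (i : ℕ)); omega⟩ : Fin (n + 1)))
    · intro _ _; trivial
    · intro lam hlam mu hmu hgm
      have hcount : ∀ k : ℕ, k ≤ L → lam.parts.count (2 ^ k) = mu.parts.count (2 ^ k) := by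
        intro k hk
        have h2 := congrFun hgm (⟨k, by omega⟩ : Fin (L + 1))
        simpa using congrArg Fin.val h2
      have hparts : lam.parts = mu.parts := by
        ext a
        by_cases ha : ∃ k : ℕ, k ≤ L ∧ a = 2 ^ k
        · obtain ⟨k, hk, rfl⟩ := ha
          exact hcount k hk
        · push_neg at ha
          have h1 : lam.parts.count a = 0 := by
            rw [Multiset.count_eq_zero]
            intro hmem
            obtain ⟨k, rfl⟩ := hlam a hmem
            have hle : 2 ^ k ≤ n := by
              calc 2 ^ k ≤ lam.parts.sum :=
                Multiset.single_le_sum (fun x _ => Nat.zero_le x) _ hmem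
              _ = n := lam.parts_sum
            exact ha k (Nat.le_log_of_pow_le (by norm_num) hle) rfl
          have h2 : mu.parts.count a = 0 := by
            rw [Multiset.count_eq_zero]
            intro hmem
            obtain ⟨k, rfl⟩ := hmu a hmem
            have hle : 2 ^ k ≤ n := by
              calc 2 ^ k ≤ mu.parts.sum :=
                Multiset.single_le_sum (fun x _ => Nat.zero_le x) _ hmem
              _ = n := mu.parts_sum
            exact ha k (Nat.le_log_of_pow_le (by norm_num) hle) rfl
          rw [h1, h2]
      exact Nat.Partition.ext hparts
  rw [Set.ncard_univ, Nat.card_eq_fintype_card] at key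
  calc pBin n ≤ Fintype.card (Fin (L + 1) → Fin (n + 1)) := key
    _ = (n + 1) ^ (L + 1) := by simp

end Stmt19

/-- Mahler. log p(n) = Θ((log n)²) for the number p(n) of binary
partitions of n; in particular p(n) ≥ n^{c log n} for some c > 0 and all large n. -/
theorem stmt19 :
    (∃ c₁ > (0 : ℝ), ∃ c₂ > (0 : ℝ), ∀ᶠ n : ℕ in Filter.atTop,
      c₁ * (Real.log n) ^ 2 ≤ Real.log (pBin n) ∧
      Real.log (pBin n) ≤ c₂ * (Real.log n) ^ 2) ∧
    ∃ c > (0 : ℝ), ∀ᶠ n : ℕ in Filter.atTop, (n : ℝ) ^ (c * Real.log n) ≤ (pBin n : ℝ) := by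
  have main : ∀ n : ℕ, 1024 ≤ n →
      (1/16 : ℝ) * (Real.log n) ^ 2 ≤ Real.log (pBin n) ∧
      Real.log (pBin n) ≤ (8 : ℝ) * (Real.log n) ^ 2 := by
    intro n hn
    set L := Nat.log 2 n with hLdef
    set x := Real.log n with hxdef
    have hn0 : (0:ℝ) < n := by positivity
    have hn1024 : (1024:ℝ) ≤ (n:ℝ) := by exact_mod_cast hn
    have hl2a : (0.6931471803 : ℝ) < Real.log 2 := Real.log_two_gt_d9
    have hl2b : Real.log 2 < 0.6931471808 := Real.log_two_lt_d9
    have hL10 : 10 ≤ L := Nat.le_log_of_pow_le (by norm_num) (by norm_num; omega)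
    have hx6 : (6:ℝ) ≤ x := by
      have h1 : Real.log 1024 ≤ x := Real.log_le_log (by norm_num) (by exact_mod_cast hn)
      have h2 : Real.log 1024 = 10 * Real.log 2 := by
        rw [show (1024:ℝ) = 2 ^ (10:ℕ) by norm_num, Real.log_pow]; norm_num
      nlinarith
    -- lower bound
    set m := (L - 1) / 2 with hm
    have hcond : 2 ^ (2 * m + 1) ≤ n := by
      have h1 : 2 * m + 1 ≤ L := by omega
      calc 2 ^ (2 * m + 1) ≤ 2 ^ L := Nat.pow_le_pow_right (by norm_num) h1
        _ ≤ n := Nat.pow_log_le_self 2 (by omega)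
    have hlow := Stmt19.pBin_lower n m hcond
    have hpB1 : 1 ≤ pBin n := le_trans Nat.one_le_two_pow hlow
    have hpBpos : (0:ℝ) < (pBin n : ℝ) := by exact_mod_cast hpB1
    have hloglow : ((m:ℝ) * (m:ℝ)) * Real.log 2 ≤ Real.log (pBin n) := by
      have h1 : ((2:ℝ)^(m*m)) ≤ (pBin n : ℝ) := by exact_mod_cast hlow
      have h2 := Real.log_le_log (by positivity : (0:ℝ) < (2:ℝ) ^ (m*m)) h1
      rw [Real.log_pow] at h2
      push_cast at h2
      nlinarith [h2]
    have hLub : x < ((L:ℝ) + 1) * Real.log 2 := by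
      have h1 : n < 2 ^ (L + 1) := Nat.lt_pow_succ_log_self (by norm_num) n
      have h2 : x < Real.log ((2:ℝ) ^ (L+1)) := by
        apply Real.log_lt_log hn0
        exact_mod_cast h1
      rw [Real.log_pow] at h2
      push_cast at h2
      nlinarith [h2]
    have hmL : (L:ℝ) ≤ 2 * (m:ℝ) + 2 := by
      have h1 : L ≤ 2 * m + 2 := by omega
      exact_mod_cast h1
    have hm0 : (0:ℝ) ≤ (m:ℝ) := Nat.cast_nonneg m
    have hm4 : (4:ℝ) ≤ (m:ℝ) := by
      have h1 : 4 ≤ m := by omega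
      exact_mod_cast h1
    have hlower : (1/16 : ℝ) * x ^ 2 ≤ Real.log (pBin n) := by
      have h1 : x < (2 * (m:ℝ) + 3) * Real.log 2 := by nlinarith
      have key : (1/16 : ℝ) * x ^ 2 ≤ ((m:ℝ) * (m:ℝ)) * Real.log 2 := by
        nlinarith [sq_nonneg (x - 2 * (m:ℝ) * Real.log 2), mul_pos (lt_of_lt_of_le (by norm_num : (0:ℝ) < 4) hm4) (lt_trans (by norm_num) hl2a)]
      linarith
    -- upper bound
    have hup := Stmt19.pBin_upper n
    have hupper : Real.log (pBin n) ≤ (8:ℝ) * x ^ 2 := by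
      have h1 : Real.log (pBin n) ≤ ((L:ℝ) + 1) * Real.log ((n:ℝ) + 1) := by
        have h2 : Real.log (pBin n) ≤ Real.log (((n:ℝ)+1) ^ (L+1)) := by
          apply Real.log_le_log hpBpos
          have h3 : ((pBin n : ℕ) : ℝ) ≤ (((n+1)^(L+1) : ℕ) : ℝ) := by exact_mod_cast hup
          push_cast at h3
          exact h3
        rw [Real.log_pow] at h2
        push_cast at h2
        linarith
      have hLl2 : (L:ℝ) * Real.log 2 ≤ x := by
        have h3 : (2:ℕ) ^ L ≤ n := Nat.pow_log_le_self 2 (by omega)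
        have h4 : Real.log ((2:ℝ)^L) ≤ x := Real.log_le_log (by positivity) (by exact_mod_cast h3)
        rw [Real.log_pow] at h4
        linarith
      have hlog1 : Real.log ((n:ℝ)+1) ≤ 2 * x := by
        have h5 : ((n:ℝ)+1) ≤ (n:ℝ)^(2:ℕ) := by nlinarith [hn1024]
        have h6 := Real.log_le_log (by positivity) h5
        rw [Real.log_pow] at h6
        push_cast at h6
        linarith
      have hlogn1pos : (0:ℝ) ≤ Real.log ((n:ℝ)+1) := Real.log_nonneg (by linarith)
      have hL0 : (0:ℝ) ≤ (L:ℝ) := Nat.cast_nonneg L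
      have hA : ((L:ℝ) + 1) * Real.log 2 ≤ 2 * x := by linarith
      have hkey : ((L:ℝ) + 1) * Real.log 2 * Real.log ((n:ℝ)+1) ≤ (2*x) * (2*x) :=
        mul_le_mul hA hlog1 hlogn1pos (by linarith)
      have hkey2 : ((L:ℝ)+1) * Real.log ((n:ℝ)+1) * Real.log 2 ≤ 4 * x^2 := by
        ring_nf at hkey ⊢
        linarith
      have hP : (0:ℝ) ≤ ((L:ℝ)+1) * Real.log ((n:ℝ)+1) := mul_nonneg (by linarith) hlogn1pos
      have hhalf : ((L:ℝ)+1) * Real.log ((n:ℝ)+1) * (1/2) ≤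
          ((L:ℝ)+1) * Real.log ((n:ℝ)+1) * Real.log 2 :=
        mul_le_mul_of_nonneg_left (by linarith) hP
      linarith
    exact ⟨hlower, hupper⟩
  constructor
  · refine ⟨1/16, by norm_num, 8, by norm_num, ?_⟩
    rw [Filter.eventually_atTop]
    exact ⟨1024, fun n hn => main n hn⟩
  · refine ⟨1/16, by norm_num, ?_⟩
    rw [Filter.eventually_atTop]
    refine ⟨1024, fun n hn => ?_⟩
    have h := (main n hn).1
    have hn0 : (0:ℝ) < n := by positivity
    have hpBpos : (0:ℝ) < (pBin n : ℝ) := by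
      have h1 : 2 ^ (2 * 0 + 1) ≤ n := by omega
      have := Stmt19.pBin_lower n 0 h1
      have h2 : 1 ≤ pBin n := by simpa using this
      exact_mod_cast h2
    rw [Real.rpow_def_of_pos hn0]
    calc Real.exp (Real.log n * (1/16 * Real.log n))
        = Real.exp (1/16 * (Real.log n)^2) := by ring_nf
      _ ≤ Real.exp (Real.log (pBin n)) := Real.exp_le_exp.2 h
      _ = (pBin n : ℝ) := Real.exp_log hpBpos
end
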